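/- arXiv:1410.7012 — 9 statements merged into one kernel-verified Lean document; each statement's English description precedes it below -/
import Mathlib

section
/- Let P be a finite set of points in ℝ^d, ω : P → [0,∞) a weight assignment, and p ∈ P a point whose weighted Voronoi cell Vor_ω(p) is bounded. Suppose every d-simplex of Del_ω(P) containing p is δ²-power protected for some δ > 0. Then (1) every simplex of Del_ω(P) containing p is a face of a d-simplex of Del_ω(P) (the maximal simplices of Del_ω(P) incident to p have dimension exactly d), and (2) for every j-simplex σ of Del_ω(P) containing p, the affine hull of Vor_ω(σ) has dimension d − j. -/
noncomputable section

/-- Weighted Voronoi cell of `p` among the points of `P`. -/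
def vorCell {d : ℕ} (P : Finset (EuclideanSpace ℝ (Fin d))) (ω : EuclideanSpace ℝ (Fin d) → ℝ)
    (p : EuclideanSpace ℝ (Fin d)) : Set (EuclideanSpace ℝ (Fin d)) :=
  {x | ∀ q ∈ P, ‖x - p‖ ^ 2 - ω p ^ 2 ≤ ‖x - q‖ ^ 2 - ω q ^ 2}

/-- Weighted Voronoi face of a simplex `σ`. -/
def vorFace {d : ℕ} (P : Finset (EuclideanSpace ℝ (Fin d))) (ω : EuclideanSpace ℝ (Fin d) → ℝ)
    (σ : Finset (EuclideanSpace ℝ (Fin d))) : Set (EuclideanSpace ℝ (Fin d)) :=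
  ⋂ p ∈ σ, vorCell P ω p

/-- `σ` is `δ²`-power protected at `c`. -/
def powerProtectedAt {d : ℕ} (P : Finset (EuclideanSpace ℝ (Fin d)))
    (ω : EuclideanSpace ℝ (Fin d) → ℝ) (σ : Finset (EuclideanSpace ℝ (Fin d)))
    (c : EuclideanSpace ℝ (Fin d)) (δsq : ℝ) : Prop :=
  ∀ q ∈ P, q ∉ σ → ∀ p ∈ σ, ‖p - c‖ ^ 2 - ω p ^ 2 + δsq < ‖q - c‖ ^ 2 - ω q ^ 2

namespace VorAux

open Module Submodule Finset

local notation "⟪" x ", " y "⟫" => @inner ℝ _ _ x y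

variable {d : ℕ}

/-- power distance difference to `q` minus to `p`. -/
def F (ω : EuclideanSpace ℝ (Fin d) → ℝ) (p q x : EuclideanSpace ℝ (Fin d)) : ℝ :=
  (‖x - q‖ ^ 2 - ω q ^ 2) - (‖x - p‖ ^ 2 - ω p ^ 2)

variable {ω : EuclideanSpace ℝ (Fin d) → ℝ} {p : EuclideanSpace ℝ (Fin d)}

lemma F_self (x : EuclideanSpace ℝ (Fin d)) : F ω p p x = 0 := sub_self _

lemma F_diff (q x y : EuclideanSpace ℝ (Fin d)) :
    F ω p q x = F ω p q y + 2 * ⟪y - x, q - p⟫ := by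
  simp only [F, norm_sub_sq_real, inner_sub_left, inner_sub_right]
  ring

lemma mem_vorFace_iff {P σ : Finset (EuclideanSpace ℝ (Fin d))} (hσP : σ ⊆ P) (hpσ : p ∈ σ)
    {x : EuclideanSpace ℝ (Fin d)} :
    x ∈ vorFace P ω σ ↔ (∀ r ∈ σ, F ω p r x = 0) ∧ ∀ q ∈ P, 0 ≤ F ω p q x := by
  simp only [vorFace, Set.mem_iInter, vorCell, Set.mem_setOf_eq]
  constructor
  · intro h
    refine ⟨fun r hr => ?_, fun q hq => ?_⟩
    · have h1 := h p hpσ r (hσP hr)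
      have h2 := h r hr p (hσP hpσ)
      simp only [F]; nlinarith
    · have h1 := h p hpσ q hq
      simp only [F]; nlinarith
  · rintro ⟨h0, h1⟩ r hr q hq
    have := h0 r hr
    have := h1 q hq
    simp only [F] at *; nlinarith

lemma exists_eps {α : Type*} (s : Finset α) (a bf : α → ℝ) :
    (∀ q ∈ s, 0 < a q) → ∃ ε : ℝ, 0 < ε ∧ ∀ q ∈ s, ε * |bf q| < a q := by
  classical
  induction s using Finset.induction with
  | empty => exact fun _ => ⟨1, one_pos, by simp⟩
  | @insert q s hq ih =>
    intro ha
    obtain ⟨ε, hε, hεs⟩ := ih fun r hr => ha r (Finset.mem_insert_of_mem hr)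
    have haq : 0 < a q := ha q (Finset.mem_insert_self _ _)
    have hden : (0:ℝ) < |bf q| + 1 := by positivity
    refine ⟨min ε (a q / (|bf q| + 1)), lt_min hε (by positivity), ?_⟩
    intro r hr
    rcases Finset.mem_insert.1 hr with rfl | hr
    · calc min ε (a r / (|bf r| + 1)) * |bf r| ≤ (a r / (|bf r| + 1)) * |bf r| :=
            mul_le_mul_of_nonneg_right (min_le_right _ _) (abs_nonneg _)
        _ < a r := by
            rw [div_mul_eq_mul_div, div_lt_iff₀ hden]
            nlinarith [abs_nonneg (bf r)]
    · exact lt_of_le_of_lt (mul_le_mul_of_nonneg_right (min_le_left _ _) (abs_nonneg _)) (hεs r hr)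

lemma convex_vorFace (P σ : Finset (EuclideanSpace ℝ (Fin d))) : Convex ℝ (vorFace P ω σ) := by
  refine convex_iInter fun r => convex_iInter fun _ => ?_
  have : vorCell P ω r = ⋂ q ∈ P, {x : EuclideanSpace ℝ (Fin d) |
      2 * ⟪x, q - r⟫ ≤ (‖q‖ ^ 2 - ω q ^ 2) - (‖r‖ ^ 2 - ω r ^ 2)} := by
    ext x
    simp only [vorCell, Set.mem_setOf_eq, Set.mem_iInter]
    have key : ∀ q : EuclideanSpace ℝ (Fin d), ‖x - q‖ ^ 2 = ‖x‖ ^ 2 - 2 * ⟪x, q⟫ + ‖q‖ ^ 2 :=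
      fun q => norm_sub_sq_real x q
    constructor
    · intro h q hq
      have := h q hq
      rw [key q, key r, inner_sub_right] at *
      linarith
    · intro h q hq
      have := h q hq
      rw [inner_sub_right] at this
      rw [key q, key r]
      linarith
  rw [this]
  refine convex_iInter fun q => convex_iInter fun _ => ?_
  exact convex_halfSpace_le
    ⟨fun a b => by rw [inner_add_left]; ring, fun c a => by rw [real_inner_smul_left, smul_eq_mul]; ring⟩ _

lemma closed_vorFace (P σ : Finset (EuclideanSpace ℝ (Fin d))) : IsClosed (vorFace P ω σ) := by
  refine isClosed_iInter fun r => isClosed_iInter fun _ => ?_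
  have : vorCell P ω r = ⋂ q ∈ P, {x : EuclideanSpace ℝ (Fin d) |
      ‖x - r‖ ^ 2 - ω r ^ 2 ≤ ‖x - q‖ ^ 2 - ω q ^ 2} := by
    ext x; simp [vorCell]
  rw [this]
  exact isClosed_biInter fun q _ => isClosed_le (by fun_prop) (by fun_prop)

end VorAux

namespace VorAux2
open Module Submodule Finset VorAux

local notation "⟪" x ", " y "⟫" => @inner ℝ _ _ x y

attribute [local instance] Classical.propDecidable

variable {d : ℕ} {ω : EuclideanSpace ℝ (Fin d) → ℝ} {p : EuclideanSpace ℝ (Fin d)}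

lemma mem_orthogonal_of_forall {s : Set (EuclideanSpace ℝ (Fin d))} {v : EuclideanSpace ℝ (Fin d)}
    (h : ∀ u ∈ s, ⟪v, u⟫ = (0:ℝ)) : v ∈ (span ℝ s)ᗮ := by
  rw [Submodule.mem_orthogonal']
  intro u hu
  induction hu using Submodule.span_induction with
  | mem u hu => exact h u hu
  | zero => exact inner_zero_right v
  | add u w _ _ hu hw => rw [inner_add_right, hu, hw]; ring
  | smul a u _ hu => rw [real_inner_smul_right, hu]; ring

lemma eq_zero_of_span_top {s : Set (EuclideanSpace ℝ (Fin d))} (hs : span ℝ s = ⊤)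
    {v : EuclideanSpace ℝ (Fin d)} (h : ∀ u ∈ s, ⟪v, u⟫ = (0:ℝ)) : v = 0 := by
  have := mem_orthogonal_of_forall h
  rw [hs, Submodule.top_orthogonal_eq_bot] at this
  simpa using this

theorem key {P : Finset (EuclideanSpace ℝ (Fin d))} (hp : p ∈ P)
    (hbdd : Bornology.IsBounded (vorCell P ω p)) {δ : ℝ} (hδ : 0 < δ)
    (hprot : ∀ σ : Finset (EuclideanSpace ℝ (Fin d)), σ ⊆ P → p ∈ σ → σ.card = d + 1 →
      (vorFace P ω σ).Nonempty → ∃ c ∈ vorFace P ω σ, powerProtectedAt P ω σ c (δ ^ 2))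
    {σ : Finset (EuclideanSpace ℝ (Fin d))} (hσP : σ ⊆ P) (hpσ : p ∈ σ)
    (hne : (vorFace P ω σ).Nonempty) :
    ∃ (B : Finset (EuclideanSpace ℝ (Fin d))) (c : EuclideanSpace ℝ (Fin d)),
      B ⊆ P ∧ p ∉ B ∧ σ ⊆ insert p B ∧ insert p B ⊆ P ∧ B.card = d ∧
      LinearIndependent ℝ (fun q : B => (q : EuclideanSpace ℝ (Fin d)) - p) ∧
      Submodule.span ℝ (Set.range (fun q : B => (q : EuclideanSpace ℝ (Fin d)) - p)) = ⊤ ∧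
      (∀ r ∈ insert p B, F ω p r c = 0) ∧ (∀ q ∈ P, 0 ≤ F ω p q c) ∧
      (∀ q ∈ P, q ∉ insert p B → δ ^ 2 < F ω p q c) := by
  classical
  -- extreme point
  have hsub : vorFace P ω σ ⊆ vorCell P ω p := Set.biInter_subset_of_mem hpσ
  have hcomp : IsCompact (vorFace P ω σ) :=
    Metric.isCompact_of_isClosed_isBounded (closed_vorFace P σ) (hbdd.subset hsub)
  obtain ⟨c, hc⟩ := hcomp.extremePoints_nonempty hne
  rw [mem_extremePoints] at hc
  obtain ⟨hcmem, hcext⟩ := hc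
  obtain ⟨hc0, hc1⟩ := (mem_vorFace_iff hσP hpσ).1 hcmem
  -- the active set
  set S : Finset (EuclideanSpace ℝ (Fin d)) := P.filter (fun q => F ω p q c = 0) with hS
  have hpS : p ∈ S := Finset.mem_filter.2 ⟨hp, F_self c⟩
  have hσS : σ ⊆ S := fun r hr => Finset.mem_filter.2 ⟨hσP hr, hc0 r hr⟩
  have hSP : S ⊆ P := Finset.filter_subset _ _
  -- the active normals span everything
  have hspan : span ℝ ((fun q => q - p) '' (S : Set (EuclideanSpace ℝ (Fin d)))) = ⊤ := by
    by_contra hnetop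
    have hbot : (span ℝ ((fun q => q - p) '' (S : Set (EuclideanSpace ℝ (Fin d)))))ᗮ ≠ ⊥ := by
      rw [Ne, Submodule.orthogonal_eq_bot_iff]
      exact hnetop
    obtain ⟨v, hv, hv0⟩ := Submodule.exists_mem_ne_zero_of_ne_bot hbot
    have hvperp : ∀ q ∈ S, ⟪v, q - p⟫ = (0:ℝ) := fun q hq =>
      (Submodule.mem_orthogonal' _ v).1 hv (q - p) (Submodule.subset_span ⟨q, hq, rfl⟩)
    obtain ⟨ε, hε, hεlt⟩ := exists_eps (P.filter (fun q => q ∉ S)) (fun q => F ω p q c)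
      (fun q => 2 * ⟪v, q - p⟫) (by
        intro q hq
        obtain ⟨hqP, hqS⟩ := Finset.mem_filter.1 hq
        have h1 := hc1 q hqP
        have h2 : F ω p q c ≠ 0 := fun h => hqS (Finset.mem_filter.2 ⟨hqP, h⟩)
        exact lt_of_le_of_ne h1 (Ne.symm h2))
    have hpert : ∀ s : ℝ, |s| ≤ ε → c + s • v ∈ vorFace P ω σ := by
      intro s hs
      rw [mem_vorFace_iff hσP hpσ]
      have hdiff : ∀ q, F ω p q (c + s • v) = F ω p q c - s * (2 * ⟪v, q - p⟫) := by
        intro q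
        rw [F_diff q (c + s • v) c]
        have : c - (c + s • v) = (-s) • v := by module
        rw [this, real_inner_smul_left]
        ring
      constructor
      · intro r hr
        rw [hdiff r, hvperp r (hσS hr), hc0 r hr]
        ring
      · intro q hq
        by_cases hqS : q ∈ S
        · rw [hdiff q, hvperp q hqS, (Finset.mem_filter.1 hqS).2]
          simp
        · have hlt := hεlt q (Finset.mem_filter.2 ⟨hq, hqS⟩)
          rw [hdiff q]
          have habs : s * (2 * ⟪v, q - p⟫) ≤ |s| * |2 * ⟪v, q - p⟫| := by
            calc s * (2 * ⟪v, q - p⟫) ≤ |s * (2 * ⟪v, q - p⟫)| := le_abs_self _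
              _ = |s| * |2 * ⟪v, q - p⟫| := abs_mul _ _
          have : |s| * |2 * ⟪v, q - p⟫| ≤ ε * |2 * ⟪v, q - p⟫| :=
            mul_le_mul_of_nonneg_right hs (abs_nonneg _)
          linarith
    have h1 := hpert ε (by rw [abs_of_pos hε])
    have h2 := hpert (-ε) (by rw [abs_neg, abs_of_pos hε])
    have hseg : c ∈ openSegment ℝ (c + ε • v) (c + (-ε) • v) := by
      refine ⟨1/2, 1/2, by norm_num, by norm_num, by norm_num, ?_⟩
      module
    have := (hcext _ h1 _ h2 hseg).1
    have : ε • v = 0 := by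
      have h := congrArg (fun y => y - c) this
      simpa using h
    rcases smul_eq_zero.1 this with h | h
    · exact absurd h hε.ne'
    · exact hv0 h
  -- extract a basis subset
  obtain ⟨bset, hbsub, hbspan, hbli⟩ :=
    exists_linearIndependent ℝ ((fun q => q - p) '' (S : Set (EuclideanSpace ℝ (Fin d))))
  rw [hspan] at hbspan
  set B : Finset (EuclideanSpace ℝ (Fin d)) := S.filter (fun q => q - p ∈ bset) with hB
  have hBS : B ⊆ S := Finset.filter_subset _ _
  have himg : (fun q => q - p) '' (B : Set (EuclideanSpace ℝ (Fin d))) = bset := by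
    apply subset_antisymm
    · rintro _ ⟨q, hq, rfl⟩
      exact (Finset.mem_filter.1 hq).2
    · intro u hu
      obtain ⟨q, hqS, rfl⟩ := hbsub hu
      exact ⟨q, Finset.mem_filter.2 ⟨hqS, hu⟩, rfl⟩
  have hpB : p ∉ B := by
    intro h
    have h0 : (0 : EuclideanSpace ℝ (Fin d)) ∈ bset := by
      rw [← himg]
      exact ⟨p, h, sub_self p⟩
    exact hbli.ne_zero ⟨0, h0⟩ rfl
  have hrange : Set.range (fun q : B => (q : EuclideanSpace ℝ (Fin d)) - p) = bset := by
    rw [← himg]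
    ext u
    constructor
    · rintro ⟨q, rfl⟩
      exact ⟨q, q.2, rfl⟩
    · rintro ⟨q, hq, rfl⟩
      exact ⟨⟨q, hq⟩, rfl⟩
  have hBli : LinearIndependent ℝ (fun q : B => (q : EuclideanSpace ℝ (Fin d)) - p) := by
    let e : {q // q ∈ B} → bset := fun q => ⟨(q : EuclideanSpace ℝ (Fin d)) - p, by
      rw [← himg]; exact ⟨q, q.2, rfl⟩⟩
    have einj : Function.Injective e := by
      intro a b h
      have h2 : (a : EuclideanSpace ℝ (Fin d)) - p = (b : EuclideanSpace ℝ (Fin d)) - p :=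
        congrArg Subtype.val h
      exact Subtype.ext (sub_left_injective h2)
    exact hbli.comp e einj
  have hBspan : Submodule.span ℝ
      (Set.range (fun q : B => (q : EuclideanSpace ℝ (Fin d)) - p)) = ⊤ := by
    rw [hrange, hbspan]
  have hBcard : B.card = d := by
    have hb : Basis B ℝ (EuclideanSpace ℝ (Fin d)) := Basis.mk hBli (le_of_eq hBspan.symm)
    have := Module.finrank_eq_card_basis hb
    rw [finrank_euclideanSpace_fin, Fintype.card_coe] at this
    exact this.symm
  -- the d-simplex
  set τ : Finset (EuclideanSpace ℝ (Fin d)) := insert p B with hτ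
  have hτS : τ ⊆ S := Finset.insert_subset hpS hBS
  have hτP : τ ⊆ P := hτS.trans hSP
  have hpτ : p ∈ τ := Finset.mem_insert_self _ _
  have hτcard : τ.card = d + 1 := by
    rw [hτ, Finset.card_insert_of_notMem hpB, hBcard]
  have hcτ0 : ∀ r ∈ τ, F ω p r c = 0 := fun r hr => (Finset.mem_filter.1 (hτS hr)).2
  have hcτ : c ∈ vorFace P ω τ := (mem_vorFace_iff hτP hpτ).2 ⟨hcτ0, hc1⟩
  obtain ⟨c₁, hc₁mem, hc₁prot⟩ := hprot τ hτP hpτ hτcard ⟨c, hcτ⟩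
  -- the Voronoi face of τ is the single point c
  have hc₁eq : c₁ = c := by
    obtain ⟨hd0, _⟩ := (mem_vorFace_iff hτP hpτ).1 hc₁mem
    have hz : ∀ u ∈ Set.range (fun q : B => (q : EuclideanSpace ℝ (Fin d)) - p),
        ⟪c - c₁, u⟫ = (0:ℝ) := by
      rintro _ ⟨q, rfl⟩
      have hqτ : (q : EuclideanSpace ℝ (Fin d)) ∈ τ := Finset.mem_insert_of_mem q.2
      have h1 := F_diff (p := p) (ω := ω) q c₁ c
      rw [hd0 q hqτ, hcτ0 q hqτ] at h1
      linarith
    have := eq_zero_of_span_top hBspan hz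
    have := sub_eq_zero.1 this
    exact this.symm
  rw [hc₁eq] at hc₁prot
  have hgt : ∀ q ∈ P, q ∉ τ → δ ^ 2 < F ω p q c := by
    intro q hq hqτ
    have h := hc₁prot q hq hqτ p hpτ
    have e1 : ‖p - c‖ = ‖c - p‖ := norm_sub_rev _ _
    have e2 : ‖q - c‖ = ‖c - q‖ := norm_sub_rev _ _
    rw [e1, e2] at h
    simp only [F]
    linarith
  have hστ : σ ⊆ τ := by
    intro r hr
    by_contra hrτ
    have h1 := hgt r (hσP hr) hrτ
    rw [hc0 r hr] at h1
    nlinarith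
  exact ⟨B, c, hBS.trans hSP, hpB, hστ, hτP, hBcard, hBli, hBspan, hcτ0, hc1, hgt⟩



theorem main
    (d : ℕ) (P : Finset (EuclideanSpace ℝ (Fin d)))
    (ω : EuclideanSpace ℝ (Fin d) → ℝ) (hω : ∀ q ∈ P, 0 ≤ ω q)
    (p : EuclideanSpace ℝ (Fin d)) (hp : p ∈ P)
    (hbdd : Bornology.IsBounded (vorCell P ω p))
    (δ : ℝ) (hδ : 0 < δ)
    (hprot : ∀ σ : Finset (EuclideanSpace ℝ (Fin d)), σ ⊆ P → p ∈ σ → σ.card = d + 1 →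
      (vorFace P ω σ).Nonempty → ∃ c ∈ vorFace P ω σ, powerProtectedAt P ω σ c (δ ^ 2)) :
    (∀ σ : Finset (EuclideanSpace ℝ (Fin d)), σ ⊆ P → p ∈ σ → (vorFace P ω σ).Nonempty →
      ∃ σd : Finset (EuclideanSpace ℝ (Fin d)), σd ⊆ P ∧ σ ⊆ σd ∧ p ∈ σd ∧
        σd.card = d + 1 ∧ (vorFace P ω σd).Nonempty) ∧
    (∀ j : ℕ, j ≤ d → ∀ σ : Finset (EuclideanSpace ℝ (Fin d)), σ ⊆ P → p ∈ σ →
      σ.card = j + 1 → (vorFace P ω σ).Nonempty →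
      Module.finrank ℝ (affineSpan ℝ (vorFace P ω σ)).direction = d - j) := by
  constructor
  · intro σ hσP hpσ hne
    obtain ⟨B, c, hBP, hpB, hστ, hτP, hBcard, -, -, hcτ0, hc1, -⟩ :=
      key hp hbdd hδ hprot hσP hpσ hne
    refine ⟨insert p B, hτP, hστ, Finset.mem_insert_self _ _, ?_, ⟨c, ?_⟩⟩
    · rw [Finset.card_insert_of_notMem hpB, hBcard]
    · exact (mem_vorFace_iff hτP (Finset.mem_insert_self _ _)).2 ⟨hcτ0, hc1⟩
  · intro j hj σ hσP hpσ hcard hne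
    obtain ⟨B, c, hBP, hpB, hστ, hτP, hBcard, hBli, hBspan, hcτ0, hc1, hgt⟩ :=
      key hp hbdd hδ hprot hσP hpσ hne
    let b : Basis B ℝ (EuclideanSpace ℝ (Fin d)) := Basis.mk hBli (le_of_eq hBspan.symm)
    have hbapply : ∀ q : B, b q = (q : EuclideanSpace ℝ (Fin d)) - p := fun q => Basis.mk_apply _ _ _
    let w : B → EuclideanSpace ℝ (Fin d) := fun i =>
      (InnerProductSpace.toDual ℝ (EuclideanSpace ℝ (Fin d))).symm
        ((b.dualBasis i).toContinuousLinearMap)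
    have hw : ∀ i k : B, ⟪w i, (k : EuclideanSpace ℝ (Fin d)) - p⟫ = if k = i then (1:ℝ) else 0 := by
      intro i k
      have h1 : ⟪w i, (k : EuclideanSpace ℝ (Fin d)) - p⟫ =
          InnerProductSpace.toDual ℝ _ (w i) ((k : EuclideanSpace ℝ (Fin d)) - p) :=
        (InnerProductSpace.toDual_apply_apply).symm
      rw [h1]
      show (InnerProductSpace.toDual ℝ _) ((InnerProductSpace.toDual ℝ _).symm _) _ = _
      rw [LinearIsometryEquiv.apply_symm_apply]
      have h2 : ((b.dualBasis i).toContinuousLinearMap) ((k : EuclideanSpace ℝ (Fin d)) - p) =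
          b.dualBasis i ((k : EuclideanSpace ℝ (Fin d)) - p) := rfl
      rw [h2, ← hbapply k, Basis.dualBasis_apply_self]
    have hc0σ : ∀ r ∈ σ, F ω p r c = 0 := fun r hr => hcτ0 r (hστ hr)
    have hcσ : c ∈ vorFace P ω σ := (mem_vorFace_iff hσP hpσ).2 ⟨hc0σ, hc1⟩
    classical
    set σ' := σ.erase p with hσ'def
    have hσ'B : σ' ⊆ B := by
      intro q hq
      obtain ⟨hqp, hqσ⟩ := Finset.mem_erase.1 hq
      rcases Finset.mem_insert.1 (hστ hqσ) with h | h
      · exact absurd h hqp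
      · exact h
    have hσ'card : σ'.card = j := by
      rw [hσ'def, Finset.card_erase_of_mem hpσ, hcard]
      omega
    -- upper bound
    set U : Submodule ℝ (EuclideanSpace ℝ (Fin d)) :=
      span ℝ (Set.range (fun r : σ' => (r : EuclideanSpace ℝ (Fin d)) - p)) with hUdef
    have hUfin : finrank ℝ U = j := by
      have hli : LinearIndependent ℝ (fun r : σ' => (r : EuclideanSpace ℝ (Fin d)) - p) := by
        let e : {r // r ∈ σ'} → {q // q ∈ B} := fun r => ⟨(r : EuclideanSpace ℝ (Fin d)), hσ'B r.2⟩
        have einj : Function.Injective e := by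
          intro a b h
          have h2 := congrArg (fun x : {q // q ∈ B} => (x : EuclideanSpace ℝ (Fin d))) h
          exact Subtype.ext h2
        exact hBli.comp e einj
      rw [hUdef, finrank_span_eq_card hli, Fintype.card_coe, hσ'card]
    have hUorth : finrank ℝ (Uᗮ : Submodule ℝ (EuclideanSpace ℝ (Fin d))) = d - j := by
      have h := U.finrank_add_finrank_orthogonal
      rw [hUfin, finrank_euclideanSpace_fin] at h
      omega
    have hdirle : (affineSpan ℝ (vorFace P ω σ)).direction ≤ Uᗮ := by
      have hsub2 : vorFace P ω σ ⊆ (AffineSubspace.mk' c Uᗮ :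
          AffineSubspace ℝ (EuclideanSpace ℝ (Fin d))) := by
        intro x hx
        rw [SetLike.mem_coe, AffineSubspace.mem_mk']
        apply mem_orthogonal_of_forall
        rintro _ ⟨r, rfl⟩
        obtain ⟨hx0, _⟩ := (mem_vorFace_iff hσP hpσ).1 hx
        have hrσ : (r : EuclideanSpace ℝ (Fin d)) ∈ σ := (Finset.mem_erase.1 r.2).2
        have h1 := F_diff (ω := ω) (p := p) (r : EuclideanSpace ℝ (Fin d)) x c
        rw [hx0 _ hrσ, hc0σ _ hrσ] at h1
        have h2 : ⟪c - x, (r : EuclideanSpace ℝ (Fin d)) - p⟫ = (0:ℝ) := by linarith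
        have h3 : x -ᵥ c = -(c - x) := by simp [vsub_eq_sub]
        rw [h3, inner_neg_left, h2, neg_zero]
      calc (affineSpan ℝ (vorFace P ω σ)).direction
          ≤ (AffineSubspace.mk' c Uᗮ).direction :=
            AffineSubspace.direction_le (affineSpan_le.2 hsub2)
        _ = Uᗮ := AffineSubspace.direction_mk' c _
    -- lower bound
    have hwli : LinearIndependent ℝ w := by
      rw [Fintype.linearIndependent_iff]
      intro g hg i
      have h1 : ⟪∑ k, g k • w k, (i : EuclideanSpace ℝ (Fin d)) - p⟫ = (0:ℝ) := by
        rw [hg, inner_zero_left]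
      rw [sum_inner] at h1
      simp only [real_inner_smul_left, hw, mul_ite, mul_one, mul_zero] at h1
      rwa [Finset.sum_ite_eq Finset.univ i g, if_pos (Finset.mem_univ i)] at h1
    have hwdir : ∀ i : B, (i : EuclideanSpace ℝ (Fin d)) ∉ σ →
        w i ∈ (affineSpan ℝ (vorFace P ω σ)).direction := by
      intro i hiσ
      obtain ⟨ε, hε, hεlt⟩ := exists_eps (P.filter (fun q => q ∉ insert p B))
        (fun q => F ω p q c) (fun q => 2 * ⟪w i, q - p⟫) (fun q hq =>
          lt_trans (pow_pos hδ 2)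
            (hgt q (Finset.mem_filter.1 hq).1 (Finset.mem_filter.1 hq).2))
      have hdiff : ∀ q, F ω p q (c - ε • w i) = F ω p q c + ε * (2 * ⟪w i, q - p⟫) := by
        intro q
        rw [F_diff q (c - ε • w i) c]
        have h4 : c - (c - ε • w i) = ε • w i := by module
        rw [h4, real_inner_smul_left]
        ring
      have hx : c - ε • w i ∈ vorFace P ω σ := by
        rw [mem_vorFace_iff hσP hpσ]
        constructor
        · intro r hr
          rcases eq_or_ne r p with rfl | hrp
          · exact F_self _
          · have hrB : r ∈ B := hσ'B (Finset.mem_erase.2 ⟨hrp, hr⟩)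
            have h5 : ⟪w i, r - p⟫ = (0:ℝ) := by
              have h6 := hw i ⟨r, hrB⟩
              rw [if_neg (by intro h; exact hiσ (by rw [← congrArg Subtype.val h]; exact hr))] at h6
              exact h6
            rw [hdiff r, hc0σ r hr, h5]
            ring
        · intro q hq
          by_cases hqτ : q ∈ insert p B
          · rcases Finset.mem_insert.1 hqτ with rfl | hqB
            · exact le_of_eq (F_self _).symm
            · have h0 := hw i ⟨q, hqB⟩
              have h7 : (0:ℝ) ≤ 2 * ⟪w i, q - p⟫ := by
                rw [h0]
                split_ifs <;> norm_num
              rw [hdiff q, hcτ0 q hqτ]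
              nlinarith
          · have hlt := hεlt q (Finset.mem_filter.2 ⟨hq, hqτ⟩)
            rw [hdiff q]
            have h8 : -(ε * |2 * ⟪w i, q - p⟫|) ≤ ε * (2 * ⟪w i, q - p⟫) := by
              have h9 : -|2 * ⟪w i, q - p⟫| ≤ 2 * ⟪w i, q - p⟫ := neg_abs_le _
              nlinarith
            linarith
      have hmem1 := AffineSubspace.vsub_mem_direction
        (subset_affineSpan ℝ _ hcσ) (subset_affineSpan ℝ _ hx)
      have h10 : c -ᵥ (c - ε • w i) = ε • w i := by
        simp [vsub_eq_sub]
      rw [h10] at hmem1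
      exact (Submodule.smul_mem_iff _ hε.ne').1 hmem1
    set C : Finset (EuclideanSpace ℝ (Fin d)) := B \ σ with hCdef
    have hCcard : C.card = d - j := by
      have hC : C = B \ σ' := by
        ext q
        simp only [hCdef, hσ'def, Finset.mem_sdiff, Finset.mem_erase]
        constructor
        · rintro ⟨hqB, hqσ⟩
          exact ⟨hqB, fun h => hqσ h.2⟩
        · rintro ⟨hqB, h⟩
          refine ⟨hqB, fun hqσ => h ⟨?_, hqσ⟩⟩
          rintro rfl
          exact hpB hqB
      rw [hC, Finset.card_sdiff_of_subset hσ'B, hBcard, hσ'card]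
    let u : {k // k ∈ C} → EuclideanSpace ℝ (Fin d) :=
      fun k => w ⟨(k : EuclideanSpace ℝ (Fin d)), (Finset.mem_sdiff.1 k.2).1⟩
    have huli : LinearIndependent ℝ u := by
      refine hwli.comp _ ?_
      intro a b h
      have h2 := congrArg (fun x : {q // q ∈ B} => (x : EuclideanSpace ℝ (Fin d))) h
      exact Subtype.ext h2
    have hdirge : span ℝ (Set.range u) ≤ (affineSpan ℝ (vorFace P ω σ)).direction := by
      rw [span_le]
      rintro _ ⟨k, rfl⟩
      exact hwdir _ (Finset.mem_sdiff.1 k.2).2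
    have h1 : finrank ℝ (span ℝ (Set.range u)) = d - j := by
      rw [finrank_span_eq_card huli, Fintype.card_coe, hCcard]
    have h2 := Submodule.finrank_mono hdirge
    have h3 := Submodule.finrank_mono hdirle
    rw [h1] at h2
    rw [hUorth] at h3
    omega
end VorAux2


/-- If `Vor_ω(p)` is bounded and all `d`-simplices of `Del_ω(P)` incident to `p` are
`δ²`-power protected, then (1) every simplex of `Del_ω(P)` containing `p` is a face of a
`d`-simplex of `Del_ω(P)` containing `p`, and (2) for every `j`-simplex `σ` of `Del_ω(P)`
containing `p`, the affine hull of `Vor_ω(σ)` has dimension `d - j`. -/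
theorem dim_voronoi_of_power_protected
    (d : ℕ) (P : Finset (EuclideanSpace ℝ (Fin d)))
    (ω : EuclideanSpace ℝ (Fin d) → ℝ) (hω : ∀ q ∈ P, 0 ≤ ω q)
    (p : EuclideanSpace ℝ (Fin d)) (hp : p ∈ P)
    (hbdd : Bornology.IsBounded (vorCell P ω p))
    (δ : ℝ) (hδ : 0 < δ)
    (hprot : ∀ σ : Finset (EuclideanSpace ℝ (Fin d)), σ ⊆ P → p ∈ σ → σ.card = d + 1 →
      (vorFace P ω σ).Nonempty → ∃ c ∈ vorFace P ω σ, powerProtectedAt P ω σ c (δ ^ 2)) :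
    (∀ σ : Finset (EuclideanSpace ℝ (Fin d)), σ ⊆ P → p ∈ σ → (vorFace P ω σ).Nonempty →
      ∃ σd : Finset (EuclideanSpace ℝ (Fin d)), σd ⊆ P ∧ σ ⊆ σd ∧ p ∈ σd ∧
        σd.card = d + 1 ∧ (vorFace P ω σd).Nonempty) ∧
    (∀ j : ℕ, j ≤ d → ∀ σ : Finset (EuclideanSpace ℝ (Fin d)), σ ⊆ P → p ∈ σ →
      σ.card = j + 1 → (vorFace P ω σ).Nonempty →
      Module.finrank ℝ (affineSpan ℝ (vorFace P ω σ)).direction = d - j) :=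
  VorAux2.main d P ω hω p hp hbdd δ hδ hprot
end
end

section
/- Let P be a finite set of points in ℝ^d, ω : P → [0,∞) a weight assignment, and p ∈ P a point whose weighted Voronoi cell Vor_ω(p) is bounded. Then every simplex σ ∈ Del_ω(P) containing p is a face of a simplex σ' ∈ Del_ω(P) (with p ∈ σ' and σ ⊆ σ') whose affine hull has dimension d. -/
noncomputable section

/-! Start from a point `x` of the face `Vor_ω(σ)` and let `τ ⊇ σ` be the set of points of `P`
whose power distance to `x` is minimal. If the affine hull of `τ` is not full-dimensional, pick
`v ≠ 0` orthogonal to it. Along the ray `x + t v` the power distances to the points of `τ` change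
by the same amount, because `⟪q - p, v⟫ = 0` for `q ∈ τ`, so they stay tied. As `Vor_ω(p)` is
bounded, the ray leaves it, and at the exit time a point `q` with `⟪q - p, v⟫ > 0` joins the tie,
raising the dimension. Hence a tie set of maximal dimension among those reachable from `x` is
`d`-dimensional. -/

open RealInnerProductSpace Finset Module

lemma norm_add_smul_sub_sq_sub_norm_add_smul_sub_sq {E : Type*} [NormedAddCommGroup E]
    [InnerProductSpace ℝ E] (x v p q : E) (t : ℝ) :
    ‖x + t • v - q‖ ^ 2 - ‖x + t • v - p‖ ^ 2 =
      ‖x - q‖ ^ 2 - ‖x - p‖ ^ 2 - 2 * t * ⟪q - p, v⟫ := by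
  rw [add_sub_right_comm, add_sub_right_comm x, norm_add_sq_real, norm_add_sq_real,
    real_inner_smul_right, real_inner_smul_right]
  have h : ⟪x - q, v⟫ - ⟪x - p, v⟫ = -⟪q - p, v⟫ := by
    rw [← inner_sub_left, ← inner_neg_left, sub_sub_sub_cancel_left, neg_sub]
  linear_combination (2 * t) * h

lemma Bornology.IsBounded.exists_add_smul_notMem {E : Type*} [NormedAddCommGroup E]
    [NormedSpace ℝ E] {s : Set E} (hs : Bornology.IsBounded s) (x : E) {v : E} (hv : v ≠ 0) :
    ∃ t : ℝ, 0 ≤ t ∧ x + t • v ∉ s := by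
  obtain ⟨C, hC⟩ := hs.exists_norm_le
  have hv' : 0 < ‖v‖ := norm_pos_iff.mpr hv
  refine ⟨(|C| + ‖x‖ + 1) / ‖v‖, by positivity, fun hmem => ?_⟩
  have hnorm : ‖((|C| + ‖x‖ + 1) / ‖v‖) • v‖ = |C| + ‖x‖ + 1 := by
    rw [norm_smul, Real.norm_of_nonneg (by positivity), div_mul_cancel₀ _ hv'.ne']
  have := norm_sub_le (x + ((|C| + ‖x‖ + 1) / ‖v‖) • v) x
  rw [add_sub_cancel_left, hnorm] at this
  linarith [hC _ hmem, le_abs_self C]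

variable {d : ℕ}

def powerDist (ω : EuclideanSpace ℝ (Fin d) → ℝ) (q x : EuclideanSpace ℝ (Fin d)) : ℝ :=
  ‖x - q‖ ^ 2 - ω q ^ 2

/-- For `x ∈ vorCell P ω p`, the largest simplex whose Voronoi face contains `x`. -/
def tieSet (P : Finset (EuclideanSpace ℝ (Fin d))) (ω : EuclideanSpace ℝ (Fin d) → ℝ)
    (p x : EuclideanSpace ℝ (Fin d)) : Finset (EuclideanSpace ℝ (Fin d)) :=
  P.filter fun q => powerDist ω q x = powerDist ω p x

section Voronoi

variable {P : Finset (EuclideanSpace ℝ (Fin d))} {ω : EuclideanSpace ℝ (Fin d) → ℝ}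
  {p x v : EuclideanSpace ℝ (Fin d)}

lemma mem_vorCell_iff : x ∈ vorCell P ω p ↔ ∀ q ∈ P, powerDist ω p x ≤ powerDist ω q x :=
  Iff.rfl

lemma powerDist_add_smul_sub_powerDist (q : EuclideanSpace ℝ (Fin d)) (t : ℝ) :
    powerDist ω q (x + t • v) - powerDist ω p (x + t • v) =
      powerDist ω q x - powerDist ω p x - 2 * t * ⟪q - p, v⟫ := by
  unfold powerDist
  linarith [norm_add_smul_sub_sq_sub_norm_add_smul_sub_sq x v p q t]

lemma self_mem_tieSet (hp : p ∈ P) (x : EuclideanSpace ℝ (Fin d)) : p ∈ tieSet P ω p x := by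
  simp [tieSet, hp]

lemma mem_vorFace_tieSet (hx : x ∈ vorCell P ω p) : x ∈ vorFace P ω (tieSet P ω p x) := by
  simp only [vorFace, Set.mem_iInter, tieSet, mem_filter]
  intro q hq r hr
  exact hq.2.trans_le (mem_vorCell_iff.mp hx r hr)

lemma vorFace_subset_vorCell {σ : Finset (EuclideanSpace ℝ (Fin d))} (hpσ : p ∈ σ) :
    vorFace P ω σ ⊆ vorCell P ω p :=
  Set.biInter_subset_of_mem hpσ

lemma subset_tieSet {σ : Finset (EuclideanSpace ℝ (Fin d))} (hσP : σ ⊆ P) (hpσ : p ∈ σ)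
    (hx : x ∈ vorFace P ω σ) : σ ⊆ tieSet P ω p x := by
  simp only [vorFace, Set.mem_iInter] at hx
  intro q hq
  exact mem_filter.mpr ⟨hσP hq, le_antisymm (hx q hq p (hσP hpσ)) (hx p hpσ q (hσP hq))⟩

lemma tieSet_subset_tieSet_add_smul (hv : ∀ q ∈ tieSet P ω p x, ⟪q - p, v⟫ = 0) (t : ℝ) :
    tieSet P ω p x ⊆ tieSet P ω p (x + t • v) := by
  intro q hq
  have hshift := powerDist_add_smul_sub_powerDist (ω := ω) (p := p) (x := x) (v := v) q t
  rw [hv q hq] at hshift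
  exact mem_filter.mpr ⟨(mem_filter.mp hq).1, by linarith [(mem_filter.mp hq).2]⟩

lemma add_smul_mem_vorCell_of_inner_nonpos (hx : x ∈ vorCell P ω p)
    (hv : ∀ q ∈ P, ⟪q - p, v⟫ ≤ 0) {t : ℝ} (ht : 0 ≤ t) : x + t • v ∈ vorCell P ω p := by
  intro q hq
  have hshift := powerDist_add_smul_sub_powerDist (ω := ω) (p := p) (x := x) (v := v) q t
  change powerDist ω p (x + t • v) ≤ powerDist ω q (x + t • v)
  nlinarith [hv q hq, mem_vorCell_iff.mp hx q hq]

/-- The ray from `x` in direction `v` is stopped, at the least of the times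
`(powerDist ω q x - powerDist ω p x) / (2 * ⟪q - p, v⟫)`, by the cell of some `q`
with `⟪q - p, v⟫ > 0`. -/
lemma exists_add_smul_mem_vorCell_inner_pos_mem_tieSet (hx : x ∈ vorCell P ω p)
    (hQ : (P.filter fun q => 0 < ⟪q - p, v⟫).Nonempty) :
    ∃ t : ℝ, x + t • v ∈ vorCell P ω p ∧
      ∃ q ∈ tieSet P ω p (x + t • v), 0 < ⟪q - p, v⟫ := by
  set exitTime : EuclideanSpace ℝ (Fin d) → ℝ :=
    fun q => (powerDist ω q x - powerDist ω p x) / (2 * ⟪q - p, v⟫)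
  set t := (P.filter fun q => 0 < ⟪q - p, v⟫).inf' hQ exitTime
  have hshift q := powerDist_add_smul_sub_powerDist (ω := ω) (p := p) (x := x) (v := v) q t
  have ht : 0 ≤ t := by
    refine le_inf' _ _ fun q hq => div_nonneg ?_ ?_
    · linarith [mem_vorCell_iff.mp hx q (mem_filter.mp hq).1]
    · linarith [(mem_filter.mp hq).2]
  refine ⟨t, fun q hq => ?_, ?_⟩
  · change powerDist ω p (x + t • v) ≤ powerDist ω q (x + t • v)
    by_cases hpos : 0 < ⟪q - p, v⟫
    · have htq : t ≤ exitTime q := inf'_le _ (mem_filter.mpr ⟨hq, hpos⟩)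
      rw [le_div_iff₀ (by positivity)] at htq
      linarith [hshift q]
    · nlinarith [hshift q, mem_vorCell_iff.mp hx q hq]
  · obtain ⟨q, hq, htq⟩ := exists_mem_eq_inf' hQ exitTime
    obtain ⟨hqP, hpos⟩ := mem_filter.mp hq
    refine ⟨q, mem_filter.mpr ⟨hqP, ?_⟩, hpos⟩
    have ht : t * (2 * ⟪q - p, v⟫) = powerDist ω q x - powerDist ω p x := by
      rw [show t = exitTime q from htq]
      exact div_mul_cancel₀ _ (by positivity)
    linarith [hshift q]

lemma exists_tieSet_finrank_lt (hp : p ∈ P) (hbdd : Bornology.IsBounded (vorCell P ω p))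
    (hx : x ∈ vorCell P ω p)
    (hlt : finrank ℝ (vectorSpan ℝ (tieSet P ω p x : Set (EuclideanSpace ℝ (Fin d)))) < d) :
    ∃ y ∈ vorCell P ω p, tieSet P ω p x ⊆ tieSet P ω p y ∧
      finrank ℝ (vectorSpan ℝ (tieSet P ω p x : Set (EuclideanSpace ℝ (Fin d)))) <
        finrank ℝ (vectorSpan ℝ (tieSet P ω p y : Set (EuclideanSpace ℝ (Fin d)))) := by
  set K := vectorSpan ℝ (tieSet P ω p x : Set (EuclideanSpace ℝ (Fin d)))
  have hK : K ≠ ⊤ := fun h => by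
    rw [h, finrank_top, finrank_euclideanSpace_fin] at hlt
    exact hlt.false
  obtain ⟨v, hvK, hv0⟩ := Submodule.exists_mem_ne_zero_of_ne_bot
    fun h => hK (Submodule.orthogonal_eq_bot_iff.mp h)
  have hperp : ∀ q ∈ tieSet P ω p x, ⟪q - p, v⟫ = 0 := fun q hq =>
    (Submodule.mem_orthogonal K v).mp hvK _ (vsub_mem_vectorSpan ℝ hq (self_mem_tieSet hp x))
  have hQ : (P.filter fun q => 0 < ⟪q - p, v⟫).Nonempty := by
    by_contra hQ
    simp only [not_nonempty_iff_eq_empty, filter_eq_empty_iff, not_lt] at hQ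
    obtain ⟨t, ht, hnot⟩ := hbdd.exists_add_smul_notMem x hv0
    exact hnot (add_smul_mem_vorCell_of_inner_nonpos hx hQ ht)
  obtain ⟨t, hy, q, hq, hpos⟩ := exists_add_smul_mem_vorCell_inner_pos_mem_tieSet hx hQ
  have hsub := tieSet_subset_tieSet_add_smul hperp t
  refine ⟨_, hy, hsub, Submodule.finrank_lt_finrank_of_lt <|
    (vectorSpan_mono ℝ (coe_subset.mpr hsub)).lt_of_ne fun h => hpos.ne' ?_⟩
  refine (Submodule.mem_orthogonal K v).mp hvK _ ?_
  change q - p ∈ vectorSpan ℝ _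
  rw [h]
  exact vsub_mem_vectorSpan ℝ hq (hsub (self_mem_tieSet hp x))

lemma exists_tieSet_finrank_eq (hp : p ∈ P) (hbdd : Bornology.IsBounded (vorCell P ω p))
    (hx : x ∈ vorCell P ω p) :
    ∃ y ∈ vorCell P ω p, tieSet P ω p x ⊆ tieSet P ω p y ∧
      finrank ℝ (vectorSpan ℝ (tieSet P ω p y : Set (EuclideanSpace ℝ (Fin d)))) = d := by
  classical
  set S := P.powerset.filter fun τ =>
    ∃ y ∈ vorCell P ω p, tieSet P ω p x ⊆ tieSet P ω p y ∧ tieSet P ω p y = τ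
  have hS : S.Nonempty :=
    ⟨_, mem_filter.mpr ⟨mem_powerset.mpr (filter_subset _ _), x, hx, subset_rfl, rfl⟩⟩
  obtain ⟨τ, hτ, hmax⟩ :=
    S.exists_max_image (fun τ => finrank ℝ (vectorSpan ℝ (τ : Set (EuclideanSpace ℝ (Fin d))))) hS
  obtain ⟨-, y, hy, hxy, rfl⟩ := mem_filter.mp hτ
  refine ⟨y, hy, hxy, le_antisymm ?_ ?_⟩
  · simpa [finrank_euclideanSpace_fin] using Submodule.finrank_le
      (vectorSpan ℝ (tieSet P ω p y : Set (EuclideanSpace ℝ (Fin d))))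
  · by_contra! hlt
    obtain ⟨z, hz, hyz, hrank⟩ := exists_tieSet_finrank_lt hp hbdd hy hlt
    exact (hmax _ (mem_filter.mpr
      ⟨mem_powerset.mpr (filter_subset _ _), z, hz, hxy.trans hyz, rfl⟩)).not_gt hrank

end Voronoi

theorem maximal_simplices_general
    (d : ℕ) (P : Finset (EuclideanSpace ℝ (Fin d)))
    (ω : EuclideanSpace ℝ (Fin d) → ℝ)
    (p : EuclideanSpace ℝ (Fin d)) (hp : p ∈ P)
    (hbdd : Bornology.IsBounded (vorCell P ω p))
    (σ : Finset (EuclideanSpace ℝ (Fin d))) (hσP : σ ⊆ P) (hpσ : p ∈ σ)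
    (hne : (vorFace P ω σ).Nonempty) :
    ∃ σ' : Finset (EuclideanSpace ℝ (Fin d)), σ' ⊆ P ∧ σ ⊆ σ' ∧ p ∈ σ' ∧
      (vorFace P ω σ').Nonempty ∧
      Module.finrank ℝ (affineSpan ℝ (σ' : Set (EuclideanSpace ℝ (Fin d)))).direction = d := by
  obtain ⟨x, hx⟩ := hne
  have hσ := subset_tieSet hσP hpσ hx
  obtain ⟨y, hy, hxy, hrank⟩ := exists_tieSet_finrank_eq hp hbdd (vorFace_subset_vorCell hpσ hx)
  exact ⟨tieSet P ω p y, filter_subset _ _, hσ.trans hxy, hxy (hσ hpσ), ⟨y, mem_vorFace_tieSet hy⟩,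
    by rwa [direction_affineSpan]⟩

/-- If `Vor_ω(p)` is bounded, then every simplex of `Del_ω(P)` containing `p` is a face of a
simplex of `Del_ω(P)` containing `p` whose affine hull has dimension `d`. -/
theorem maximal_simplices
    (d : ℕ) (P : Finset (EuclideanSpace ℝ (Fin d)))
    (ω : EuclideanSpace ℝ (Fin d) → ℝ) (hω : ∀ q ∈ P, 0 ≤ ω q)
    (p : EuclideanSpace ℝ (Fin d)) (hp : p ∈ P)
    (hbdd : Bornology.IsBounded (vorCell P ω p))
    (σ : Finset (EuclideanSpace ℝ (Fin d))) (hσP : σ ⊆ P) (hpσ : p ∈ σ)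
    (hne : (vorFace P ω σ).Nonempty) :
    ∃ σ' : Finset (EuclideanSpace ℝ (Fin d)), σ' ⊆ P ∧ σ ⊆ σ' ∧ p ∈ σ' ∧
      (vorFace P ω σ').Nonempty ∧
      Module.finrank ℝ (affineSpan ℝ (σ' : Set (EuclideanSpace ℝ (Fin d)))).direction = d :=
  maximal_simplices_general d P ω p hp hbdd σ hσP hpσ hne
end
end

section
/- Let P be a finite set of points in ℝ^d, ω : P → [0,∞) a weight assignment, and p ∈ P a point whose weighted Voronoi cell Vor_ω(p) is bounded, such that every d-simplex of Del_ω(P) containing p is δ²-power protected for some δ > 0. Then for every j-simplex σ ∈ Del_ω(P) containing p and every point q ∈ P∖σ, there exists a d-simplex σ^d ∈ Del_ω(P) containing p such that σ ⊆ σ^d and q ∉ σ^d. -/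
noncomputable section

open Submodule RealInnerProductSpace

variable {d : ℕ}

lemma key_id (x z r p' : EuclideanSpace ℝ (Fin d)) :
    ‖z - r‖ ^ 2 - ‖z - p'‖ ^ 2 - (‖x - r‖ ^ 2 - ‖x - p'‖ ^ 2) = 2 * ⟪z - x, p' - r⟫ := by
  simp only [norm_sub_sq_real, inner_sub_left, inner_sub_right]
  ring

lemma key_line (ω : EuclideanSpace ℝ (Fin d) → ℝ) (x u r p' : EuclideanSpace ℝ (Fin d)) (t : ℝ) :
    ‖x + t • u - r‖ ^ 2 - ω r ^ 2 - (‖x + t • u - p'‖ ^ 2 - ω p' ^ 2)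
      = (‖x - r‖ ^ 2 - ω r ^ 2 - (‖x - p'‖ ^ 2 - ω p' ^ 2)) + 2 * t * ⟪u, p' - r⟫ := by
  have h := key_id x (x + t • u) r p'
  rw [add_sub_cancel_left, real_inner_smul_left] at h
  linarith

lemma mem_face_of {P : Finset (EuclideanSpace ℝ (Fin d))} {ω : EuclideanSpace ℝ (Fin d) → ℝ}
    {p x : EuclideanSpace ℝ (Fin d)} {T : Finset (EuclideanSpace ℝ (Fin d))}
    (hx : x ∈ vorCell P ω p)
    (heq : ∀ r ∈ T, ‖x - r‖ ^ 2 - ω r ^ 2 = ‖x - p‖ ^ 2 - ω p ^ 2) :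
    x ∈ vorFace P ω T := by
  rw [vorFace, Set.mem_iInter₂]
  intro r hr
  intro s hs
  rw [heq r hr]
  exact hx s hs

lemma face_eq {P : Finset (EuclideanSpace ℝ (Fin d))} {ω : EuclideanSpace ℝ (Fin d) → ℝ}
    {p x : EuclideanSpace ℝ (Fin d)} {T : Finset (EuclideanSpace ℝ (Fin d))}
    (hTP : T ⊆ P) (hpP : p ∈ P) (hpT : p ∈ T) (hx : x ∈ vorFace P ω T) :
    x ∈ vorCell P ω p ∧ ∀ r ∈ T, ‖x - r‖ ^ 2 - ω r ^ 2 = ‖x - p‖ ^ 2 - ω p ^ 2 := by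
  rw [vorFace, Set.mem_iInter₂] at hx
  refine ⟨hx p hpT, fun r hr => le_antisymm (hx r hr p hpP) (hx p hpT r (hTP hr))⟩

lemma adv {P : Finset (EuclideanSpace ℝ (Fin d))} {ω : EuclideanSpace ℝ (Fin d) → ℝ}
    {p : EuclideanSpace ℝ (Fin d)}
    (hbdd : Bornology.IsBounded (vorCell P ω p))
    {x : EuclideanSpace ℝ (Fin d)} (hx : x ∈ vorCell P ω p)
    {u : EuclideanSpace ℝ (Fin d)} (hu : u ≠ 0) :
    ∃ t : ℝ, 0 ≤ t ∧ x + t • u ∈ vorCell P ω p ∧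
      ∃ r0 ∈ P, ⟪u, p - r0⟫ < 0 ∧
        ‖x + t • u - r0‖ ^ 2 - ω r0 ^ 2 = ‖x + t • u - p‖ ^ 2 - ω p ^ 2 := by
  classical
  set B := P.filter (fun r => ⟪u, p - r⟫ < 0) with hBdef
  have hB : B.Nonempty := by
    by_contra hBne
    rw [Finset.not_nonempty_iff_eq_empty, Finset.filter_eq_empty_iff] at hBne
    have hall : ∀ r ∈ P, 0 ≤ ⟪u, p - r⟫ := fun r hr => le_of_not_gt (hBne hr)
    have hmem : ∀ t : ℝ, 0 ≤ t → x + t • u ∈ vorCell P ω p := by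
      intro t ht r hr
      have hk := key_line ω x u r p t
      have h0 := hx r hr
      nlinarith [mul_nonneg ht (hall r hr)]
    obtain ⟨R, hR⟩ := isBounded_iff_forall_norm_le.mp hbdd
    have hupos : (0 : ℝ) < ‖u‖ := norm_pos_iff.mpr hu
    set t := (R + ‖x‖ + 1) / ‖u‖ with htdef
    have ht : 0 ≤ t := by
      apply div_nonneg _ hupos.le
      have := norm_nonneg x
      have hR0 : 0 ≤ R := le_trans (norm_nonneg x) (by simpa using hR _ (hmem 0 le_rfl))
      linarith
    have h1 : ‖x + t • u‖ ≤ R := hR _ (hmem t ht)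
    have h2 : ‖t • u‖ ≤ ‖x + t • u‖ + ‖x‖ := by
      calc ‖t • u‖ = ‖x + t • u - x‖ := by rw [add_sub_cancel_left]
      _ ≤ ‖x + t • u‖ + ‖x‖ := norm_sub_le _ _
    rw [norm_smul, Real.norm_eq_abs, abs_of_nonneg ht, htdef, div_mul_cancel₀ _ hupos.ne'] at h2
    linarith
  obtain ⟨r0, hr0B, hmin⟩ := B.exists_min_image
    (fun r => (‖x - r‖ ^ 2 - ω r ^ 2 - (‖x - p‖ ^ 2 - ω p ^ 2)) / (2 * (-⟪u, p - r⟫))) hB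
  rw [hBdef, Finset.mem_filter] at hr0B
  obtain ⟨hr0P, hr0neg⟩ := hr0B
  set t := (‖x - r0‖ ^ 2 - ω r0 ^ 2 - (‖x - p‖ ^ 2 - ω p ^ 2)) / (2 * (-⟪u, p - r0⟫)) with htdef
  have hden : (0 : ℝ) < 2 * (-⟪u, p - r0⟫) := by linarith
  have ht : 0 ≤ t := div_nonneg (by have := hx r0 hr0P; linarith) hden.le
  refine ⟨t, ht, ?_, r0, hr0P, hr0neg, ?_⟩
  · intro r hr
    have hk := key_line ω x u r p t
    by_cases hc : ⟪u, p - r⟫ < 0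
    · have hrB : r ∈ B := Finset.mem_filter.mpr ⟨hr, hc⟩
      have hdenr : (0 : ℝ) < 2 * (-⟪u, p - r⟫) := by linarith
      have h3 := (le_div_iff₀ hdenr).mp (hmin r hrB)
      linarith
    · push_neg at hc
      have h0 := hx r hr
      nlinarith [mul_nonneg ht hc]
  · have hk := key_line ω x u r0 p t
    have : t * (2 * (-⟪u, p - r0⟫)) = ‖x - r0‖ ^ 2 - ω r0 ^ 2 - (‖x - p‖ ^ 2 - ω p ^ 2) := by
      rw [htdef, div_mul_cancel₀ _ hden.ne']
    nlinarith

lemma card_le_dim {P : Finset (EuclideanSpace ℝ (Fin d))} {ω : EuclideanSpace ℝ (Fin d) → ℝ}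
    {p : EuclideanSpace ℝ (Fin d)} (hp : p ∈ P) {δ : ℝ} (hδ : 0 < δ)
    (hprot : ∀ σ : Finset (EuclideanSpace ℝ (Fin d)), σ ⊆ P → p ∈ σ → σ.card = d + 1 →
      (vorFace P ω σ).Nonempty → ∃ c ∈ vorFace P ω σ, powerProtectedAt P ω σ c (δ ^ 2))
    {T : Finset (EuclideanSpace ℝ (Fin d))} (hTP : T ⊆ P) (hpT : p ∈ T)
    (hTne : (vorFace P ω T).Nonempty) :
    T.card ≤ d + 1 := by
  classical
  by_contra hcard
  push_neg at hcard
  obtain ⟨x, hx⟩ := hTne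
  obtain ⟨hxp, hxeq⟩ := face_eq hTP hp hpT hx
  -- extract a spanning independent subset of the difference vectors
  obtain ⟨b, hb_sub, hb_span, hb_li⟩ :=
    exists_linearIndependent ℝ ((fun r => p - r) '' (T : Set (EuclideanSpace ℝ (Fin d))))
  have hbfin : b.Finite :=
    Set.Finite.subset ((T : Set (EuclideanSpace ℝ (Fin d))).toFinite.image _) hb_sub
  haveI := hbfin.fintype
  set τ1 := T.filter (fun r => p - r ∈ b) with hτ1def
  have himg : τ1.image (fun r => p - r) = b.toFinset := by
    ext v
    simp only [Finset.mem_image, Set.mem_toFinset, hτ1def, Finset.mem_filter]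
    constructor
    · rintro ⟨r, ⟨_, hrb⟩, rfl⟩; exact hrb
    · intro hv
      obtain ⟨r, hrT, rfl⟩ := hb_sub hv
      exact ⟨r, ⟨hrT, hv⟩, rfl⟩
  have hτ1card : τ1.card ≤ d := by
    have h1 : Module.finrank ℝ (span ℝ b) = b.toFinset.card := finrank_span_set_eq_card hb_li
    have h2 : Module.finrank ℝ (span ℝ b) ≤ d := by
      have := (span ℝ b).finrank_le
      rwa [finrank_euclideanSpace_fin] at this
    have h3 : τ1.card = (τ1.image (fun r => p - r)).card :=
      (Finset.card_image_of_injective _ sub_right_injective).symm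
    rw [h3, himg]
    omega
  have hτ0 : insert p τ1 ⊆ T := by
    apply Finset.insert_subset hpT (Finset.filter_subset _ _)
  obtain ⟨τ, hτ0τ, hτT, hτcard⟩ :=
    Finset.exists_subsuperset_card_eq (n := d + 1) hτ0 (by
      have := Finset.card_insert_le p τ1; omega) (by omega)
  have hpτ : p ∈ τ := hτ0τ (Finset.mem_insert_self _ _)
  have hτP : τ ⊆ P := hτT.trans hTP
  have hτne : (vorFace P ω τ).Nonempty := by
    refine ⟨x, mem_face_of hxp ?_⟩
    intro r hr; exact hxeq r (hτT hr)
  obtain ⟨c, hcface, hcprot⟩ := hprot τ hτP hpτ hτcard hτne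
  obtain ⟨hcp, hceq⟩ := face_eq hτP hp hpτ hcface
  -- c - x is orthogonal to all difference vectors of τ, hence to span b = span over T
  have horth : ∀ s ∈ τ, ⟪c - x, p - s⟫ = 0 := by
    intro s hs
    have hk := key_id x c s p
    have h1 := hxeq s (hτT hs)
    have h2 := hceq s hs
    nlinarith
  have hspan : span ℝ ((fun r => p - r) '' (T : Set (EuclideanSpace ℝ (Fin d))))
      ≤ (span ℝ {c - x})ᗮ := by
    rw [← hb_span, Submodule.span_le]
    intro v hv
    rw [SetLike.mem_coe, Submodule.mem_orthogonal]
    intro w hw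
    obtain ⟨r, hrT, rfl⟩ := hb_sub hv
    have hrτ : r ∈ τ := hτ0τ (Finset.mem_insert_of_mem (Finset.mem_filter.mpr ⟨hrT, hv⟩))
    have := horth r hrτ
    have hwmem := Submodule.mem_span_singleton.mp hw
    obtain ⟨a, rfl⟩ := hwmem
    rw [real_inner_smul_left, real_inner_comm] at *
    rw [this]; ring
  -- pick a point of T outside τ
  have hss : τ ⊂ T := hτT.ssubset_of_ne (by intro h; rw [h] at hτcard; omega)
  obtain ⟨r1, hr1T, hr1τ⟩ := Finset.exists_of_ssubset hss
  have hr1span : p - r1 ∈ (span ℝ {c - x})ᗮ :=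
    hspan (Submodule.subset_span ⟨r1, hr1T, rfl⟩)
  have hr1orth : ⟪c - x, p - r1⟫ = 0 := by
    rw [Submodule.mem_orthogonal] at hr1span
    have h := hr1span (c - x) (Submodule.mem_span_singleton_self _)
    first
    | exact h
    | · rw [real_inner_comm]; exact h
  -- protection contradicts equality of powers at c
  have hprot1 := hcprot r1 (hTP hr1T) hr1τ p hpτ
  have hk := key_id x c r1 p
  have h1 := hxeq r1 hr1T
  have hd2 : (0:ℝ) < δ ^ 2 := by positivity
  rw [norm_sub_rev p c, norm_sub_rev r1 c] at hprot1
  nlinarith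

lemma grow {P : Finset (EuclideanSpace ℝ (Fin d))} {ω : EuclideanSpace ℝ (Fin d) → ℝ}
    {p : EuclideanSpace ℝ (Fin d)} (hp : p ∈ P)
    (hbdd : Bornology.IsBounded (vorCell P ω p)) {δ : ℝ} (hδ : 0 < δ)
    (hprot : ∀ σ : Finset (EuclideanSpace ℝ (Fin d)), σ ⊆ P → p ∈ σ → σ.card = d + 1 →
      (vorFace P ω σ).Nonempty → ∃ c ∈ vorFace P ω σ, powerProtectedAt P ω σ c (δ ^ 2)) :
    ∀ (n : ℕ) (S : Finset (EuclideanSpace ℝ (Fin d))) (x : EuclideanSpace ℝ (Fin d)),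
      S ⊆ P → p ∈ S → x ∈ vorCell P ω p →
      (∀ r ∈ S, ‖x - r‖ ^ 2 - ω r ^ 2 = ‖x - p‖ ^ 2 - ω p ^ 2) → d + 1 ≤ S.card + n →
      ∃ (T : Finset (EuclideanSpace ℝ (Fin d))) (y : EuclideanSpace ℝ (Fin d)),
        S ⊆ T ∧ T ⊆ P ∧ T.card = d + 1 ∧ y ∈ vorCell P ω p ∧
        ∀ r ∈ T, ‖y - r‖ ^ 2 - ω r ^ 2 = ‖y - p‖ ^ 2 - ω p ^ 2 := by
  classical
  intro n
  induction n with
  | zero =>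
    intro S x hSP hpS hx heq hn
    have hle : S.card ≤ d + 1 := card_le_dim hp hδ hprot hSP hpS ⟨x, mem_face_of hx heq⟩
    exact ⟨S, x, subset_rfl, hSP, by omega, hx, heq⟩
  | succ n ih =>
    intro S x hSP hpS hx heq hn
    by_cases hc : d + 1 ≤ S.card
    · have hle : S.card ≤ d + 1 := card_le_dim hp hδ hprot hSP hpS ⟨x, mem_face_of hx heq⟩
      exact ⟨S, x, subset_rfl, hSP, by omega, hx, heq⟩
    · push_neg at hc
      have hScard1 : 1 ≤ S.card := Finset.card_pos.mpr ⟨p, hpS⟩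
      set W := span ℝ (((S.erase p).image (fun r => p - r) : Finset (EuclideanSpace ℝ (Fin d)))
          : Set (EuclideanSpace ℝ (Fin d))) with hWdef
      have hWrank : Module.finrank ℝ W ≤ d - 1 := by
        have h1 := finrank_span_finset_le_card (R := ℝ) (M := EuclideanSpace ℝ (Fin d))
          ((S.erase p).image (fun r => p - r))
        have h2 : ((S.erase p).image (fun r => p - r)).card ≤ (S.erase p).card :=
          Finset.card_image_le
        have h3 : (S.erase p).card = S.card - 1 := Finset.card_erase_of_mem hpS
        have : Set.finrank ℝ (((S.erase p).image (fun r => p - r) : Finset (EuclideanSpace ℝ (Fin d)))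
          : Set (EuclideanSpace ℝ (Fin d))) = Module.finrank ℝ W := rfl
        omega
      have hWne : W ≠ ⊤ := by
        intro h
        rw [h] at hWrank
        have : Module.finrank ℝ (⊤ : Submodule ℝ (EuclideanSpace ℝ (Fin d))) = d := by
          rw [finrank_top, finrank_euclideanSpace_fin]
        omega
      have hWo : Wᗮ ≠ ⊥ := fun h => hWne (Submodule.orthogonal_eq_bot_iff.mp h)
      obtain ⟨u, huW, hune⟩ := (Submodule.ne_bot_iff _).mp hWo
      have hortho : ∀ r ∈ S, ⟪u, p - r⟫ = 0 := by
        intro r hr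
        by_cases hrp : r = p
        · simp [hrp]
        · have hmem : p - r ∈ W := Submodule.subset_span
            (by exact Finset.mem_coe.mpr (Finset.mem_image_of_mem _ (Finset.mem_erase.mpr ⟨hrp, hr⟩)))
          have := (Submodule.mem_orthogonal _ _).mp huW (p - r) hmem
          rw [real_inner_comm]
          exact this
      obtain ⟨t, ht, hy, r0, hr0P, hr0neg, hr0eq⟩ := adv hbdd hx hune
      have hr0S : r0 ∉ S := by
        intro hr0S
        rw [hortho r0 hr0S] at hr0neg
        exact lt_irrefl 0 hr0neg
      have heq' : ∀ r ∈ insert r0 S,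
          ‖x + t • u - r‖ ^ 2 - ω r ^ 2 = ‖x + t • u - p‖ ^ 2 - ω p ^ 2 := by
        intro r hr
        rcases Finset.mem_insert.mp hr with rfl | hrS
        · exact hr0eq
        · have hk := key_line ω x u r p t
          have h1 := heq r hrS
          have h2 := hortho r hrS
          rw [h2] at hk
          linarith
      have hcard' : d + 1 ≤ (insert r0 S).card + n := by
        rw [Finset.card_insert_of_notMem hr0S]
        omega
      obtain ⟨T, y, h1, h2, h3, h4, h5⟩ := ih (insert r0 S) (x + t • u)
        (Finset.insert_subset hr0P hSP) (Finset.mem_insert_of_mem hpS) hy heq' hcard'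
      exact ⟨T, y, (Finset.subset_insert _ _).trans h1, h2, h3, h4, h5⟩

/-- Separation: for every `j`-simplex `σ ∈ Del_ω(P)` containing `p` and every `q ∈ P ∖ σ`,
there is a `d`-simplex of `Del_ω(P)` containing `p` that contains `σ` but not `q`. -/
theorem separation
    (d : ℕ) (P : Finset (EuclideanSpace ℝ (Fin d)))
    (ω : EuclideanSpace ℝ (Fin d) → ℝ) (hω : ∀ q ∈ P, 0 ≤ ω q)
    (p : EuclideanSpace ℝ (Fin d)) (hp : p ∈ P)
    (hbdd : Bornology.IsBounded (vorCell P ω p))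
    (δ : ℝ) (hδ : 0 < δ)
    (hprot : ∀ σ : Finset (EuclideanSpace ℝ (Fin d)), σ ⊆ P → p ∈ σ → σ.card = d + 1 →
      (vorFace P ω σ).Nonempty → ∃ c ∈ vorFace P ω σ, powerProtectedAt P ω σ c (δ ^ 2))
    (j : ℕ) (σ : Finset (EuclideanSpace ℝ (Fin d))) (hσP : σ ⊆ P) (hpσ : p ∈ σ)
    (hcard : σ.card = j + 1) (hne : (vorFace P ω σ).Nonempty)
    (q : EuclideanSpace ℝ (Fin d)) (hq : q ∈ P) (hqσ : q ∉ σ) :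
    ∃ σd : Finset (EuclideanSpace ℝ (Fin d)), σd ⊆ P ∧ p ∈ σd ∧ σ ⊆ σd ∧ q ∉ σd ∧
      σd.card = d + 1 ∧ (vorFace P ω σd).Nonempty := by
  classical
  have hpq : p ≠ q := fun h => hqσ (h ▸ hpσ)
  obtain ⟨x0, hx0⟩ := hne
  obtain ⟨hx0p, heq0⟩ := face_eq hσP hp hpσ hx0
  obtain ⟨τ, x1, hστ, hτP, hτcard, hx1, heq1⟩ :=
    grow hp hbdd hδ hprot (d + 1) σ x0 hσP hpσ hx0p heq0 (by omega)
  by_cases hqτ : q ∈ τ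
  · -- `q` landed in the big simplex; exchange it for another point.
    have hpτ : p ∈ τ := hστ hpσ
    have hd1 : 1 ≤ d := by
      have h2 : 1 < τ.card := Finset.one_lt_card.mpr ⟨p, hpτ, q, hqτ, hpq⟩
      omega
    have hpe : p ∈ τ.erase q := Finset.mem_erase.mpr ⟨hpq, hpτ⟩
    set W := span ℝ ((((τ.erase q).erase p).image (fun r => p - r)
        : Finset (EuclideanSpace ℝ (Fin d))) : Set (EuclideanSpace ℝ (Fin d))) with hWdef
    have hWrank : Module.finrank ℝ W ≤ d - 1 := by
      have h1 := finrank_span_finset_le_card (R := ℝ) (M := EuclideanSpace ℝ (Fin d))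
        (((τ.erase q).erase p).image (fun r => p - r))
      have h2 : (((τ.erase q).erase p).image (fun r => p - r)).card ≤ ((τ.erase q).erase p).card :=
        Finset.card_image_le
      have h3 : ((τ.erase q).erase p).card = (τ.erase q).card - 1 := Finset.card_erase_of_mem hpe
      have h4 : (τ.erase q).card = τ.card - 1 := Finset.card_erase_of_mem hqτ
      have h5 : Set.finrank ℝ (((((τ.erase q).erase p).image (fun r => p - r))
          : Finset (EuclideanSpace ℝ (Fin d))) : Set (EuclideanSpace ℝ (Fin d)))
          = Module.finrank ℝ W := rfl
      omega
    have hWne : W ≠ ⊤ := by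
      intro h
      rw [h] at hWrank
      have : Module.finrank ℝ (⊤ : Submodule ℝ (EuclideanSpace ℝ (Fin d))) = d := by
        rw [finrank_top, finrank_euclideanSpace_fin]
      omega
    have hWo : Wᗮ ≠ ⊥ := fun h => hWne (Submodule.orthogonal_eq_bot_iff.mp h)
    have horthoW : ∀ u ∈ Wᗮ, ∀ r ∈ τ.erase q, ⟪u, p - r⟫ = 0 := by
      intro u huW r hr
      by_cases hrp : r = p
      · simp [hrp]
      · have hmem : p - r ∈ W := Submodule.subset_span
          (Finset.mem_coe.mpr (Finset.mem_image_of_mem _ (Finset.mem_erase.mpr ⟨hrp, hr⟩)))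
        have := (Submodule.mem_orthogonal _ _).mp huW (p - r) hmem
        rw [real_inner_comm]
        exact this
    by_cases hmem : p - q ∈ W
    · -- impossible: we would find `d + 2` points with a common Voronoi point
      exfalso
      obtain ⟨u, huW, hune⟩ := (Submodule.ne_bot_iff _).mp hWo
      have hortho : ∀ r ∈ τ, ⟪u, p - r⟫ = 0 := by
        intro r hr
        by_cases hrq : r = q
        · subst hrq
          have := (Submodule.mem_orthogonal _ _).mp huW (p - r) hmem
          rw [real_inner_comm]
          exact this
        · exact horthoW u huW r (Finset.mem_erase.mpr ⟨hrq, hr⟩)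
      obtain ⟨t, ht, hy, r0, hr0P, hr0neg, hr0eq⟩ := adv hbdd hx1 hune
      have hr0τ : r0 ∉ τ := fun h => by
        rw [hortho r0 h] at hr0neg; exact lt_irrefl 0 hr0neg
      have heqy : ∀ r ∈ insert r0 τ,
          ‖x1 + t • u - r‖ ^ 2 - ω r ^ 2 = ‖x1 + t • u - p‖ ^ 2 - ω p ^ 2 := by
        intro r hr
        rcases Finset.mem_insert.mp hr with rfl | hrτ
        · exact hr0eq
        · have hk := key_line ω x1 u r p t
          have h1 := heq1 r hrτ
          have h2 := hortho r hrτ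
          rw [h2] at hk
          linarith
      have hbig := card_le_dim hp hδ hprot (Finset.insert_subset hr0P hτP)
        (Finset.mem_insert_of_mem hpτ) ⟨x1 + t • u, mem_face_of hy heqy⟩
      rw [Finset.card_insert_of_notMem hr0τ, hτcard] at hbig
      omega
    · -- replace `q` by a fresh point `r0`
      have hexu : ∃ u ∈ Wᗮ, ⟪u, p - q⟫ ≠ 0 := by
        by_contra h
        push_neg at h
        exact hmem (by
          have hmem2 : p - q ∈ Wᗮᗮ := (Submodule.mem_orthogonal _ _).mpr h
          rwa [Submodule.orthogonal_orthogonal] at hmem2)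
      obtain ⟨u0, hu0W, hu0q⟩ := hexu
      obtain ⟨u, huW, huq⟩ : ∃ u ∈ Wᗮ, 0 < ⟪u, p - q⟫ := by
        rcases lt_or_gt_of_ne hu0q with h | h
        · exact ⟨-u0, Submodule.neg_mem _ hu0W, by rw [inner_neg_left]; linarith⟩
        · exact ⟨u0, hu0W, h⟩
      have hune : u ≠ 0 := by
        intro h
        rw [h, inner_zero_left] at huq
        exact lt_irrefl 0 huq
      obtain ⟨t, ht, hy, r0, hr0P, hr0neg, hr0eq⟩ := adv hbdd hx1 hune
      have hr0e : r0 ∉ τ.erase q := fun h => by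
        rw [horthoW u huW r0 h] at hr0neg; exact lt_irrefl 0 hr0neg
      have hr0q : r0 ≠ q := by
        intro h
        rw [h] at hr0neg
        linarith
      have heqy : ∀ r ∈ insert r0 (τ.erase q),
          ‖x1 + t • u - r‖ ^ 2 - ω r ^ 2 = ‖x1 + t • u - p‖ ^ 2 - ω p ^ 2 := by
        intro r hr
        rcases Finset.mem_insert.mp hr with rfl | hrτ
        · exact hr0eq
        · have hk := key_line ω x1 u r p t
          have h1 := heq1 r (Finset.erase_subset _ _ hrτ)
          have h2 := horthoW u huW r hrτ
          rw [h2] at hk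
          linarith
      refine ⟨insert r0 (τ.erase q), ?_, ?_, ?_, ?_, ?_, ?_⟩
      · exact Finset.insert_subset hr0P ((Finset.erase_subset _ _).trans hτP)
      · exact Finset.mem_insert_of_mem hpe
      · intro r hr
        exact Finset.mem_insert_of_mem (Finset.mem_erase.mpr
          ⟨fun h => hqσ (h ▸ hr), hστ hr⟩)
      · intro h
        rcases Finset.mem_insert.mp h with h | h
        · exact hr0q h.symm
        · exact Finset.notMem_erase _ _ h
      · rw [Finset.card_insert_of_notMem hr0e, Finset.card_erase_of_mem hqτ, hτcard]
        omega
      · exact ⟨x1 + t • u, mem_face_of hy heqy⟩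
  · exact ⟨τ, hτP, hστ hpσ, hστ, hqτ, hτcard, ⟨x1, mem_face_of hx1 heq1⟩⟩
end
end

section
/- Let σ be a nondegenerate simplex in ℝ^d with a distinguished vertex p and a weight assignment ω on its vertices (only the weights of the vertices of the opposite face σ_p enter F). Define F_ω(p, σ) = D(p, σ)² + dist(p, N_ω(σ_p))² − R_ω(σ_p)², and let H_ω(p, σ) be the signed distance from the weighted center C_ω(σ) to the affine hull of σ_p, taken positive if C_ω(σ) lies on the same side of aff(σ_p) as p and negative otherwise. Then 2 · D(p, σ) · H_ω(p, σ) = F_ω(p, σ) − ω(p)². -/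
noncomputable section

attribute [local instance] Classical.propDecidable

/-- The `ω`-weighted normal space of a simplex with vertex set `τ`: the set of points
having equal power distance to all (weighted) vertices of `τ`. -/
def wNormal {d : ℕ} (ω : EuclideanSpace ℝ (Fin d) → ℝ) (τ : Finset (EuclideanSpace ℝ (Fin d))) :
    Set (EuclideanSpace ℝ (Fin d)) :=
  {x | ∀ a ∈ τ, ∀ b ∈ τ, ‖x - a‖ ^ 2 - ω a ^ 2 = ‖x - b‖ ^ 2 - ω b ^ 2}

/-!
`N_ω(τ)` is the affine subspace through any of its points with direction `(vectorSpan τ)ᗮ`, so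
its point of minimal power distance to a vertex is an orthogonal projection and lies in `aff τ`.
Since `N_ω(σ) ⊆ N_ω(σ_p)`, the vector `C_ω(σ) - C_ω(σ_p)` is orthogonal to `aff σ_p`; as it also
lies in the direction of `aff σ`, it equals `r • (p - π)` with `π` the foot of the altitude from
`p`. Then `H = r D` and `dist(p, N_ω(σ_p)) = dist(π, C_ω(σ_p))`, and expanding by Pythagoras the
equal power distances of `C_ω(σ)` to `p` and to a vertex `q₀` of `σ_p` gives the identity.
-/

open EuclideanGeometry

theorem AffineIndependent.notMem_affineSpan_erase {k V P : Type*} [Ring k] [Nontrivial k]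
    [AddCommGroup V] [Module k V] [AddTorsor V P] [DecidableEq P] {s : Finset P}
    (hs : AffineIndependent k ((↑) : s → P)) {p : P} (hp : p ∈ s) :
    p ∉ affineSpan k (s.erase p : Set P) := by
  have himage : ((↑) : s → P) '' {x | x ≠ ⟨p, hp⟩} = (s.erase p : Set P) := by
    ext x
    simp [and_comm]
  simpa [himage] using hs.mem_affineSpan_iff ⟨p, hp⟩ {x | x ≠ ⟨p, hp⟩}

section Euclidean

variable {V P : Type*} [NormedAddCommGroup V] [InnerProductSpace ℝ V] [MetricSpace P]
  [NormedAddTorsor V P] {s : AffineSubspace ℝ P} [Nonempty s] [s.direction.HasOrthogonalProjection]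

theorem infDist_eq_dist_of_vsub_mem_direction_orthogonal {x m : P} (hm : m ∈ s)
    (hxm : x -ᵥ m ∈ s.directionᗮ) : Metric.infDist x s = dist x m := by
  rw [← dist_orthogonalProjection_eq_infDist, coe_orthogonalProjection_eq_iff_mem.2 ⟨hm, hxm⟩]

theorem vsub_mem_direction_orthogonal_of_forall_dist_le {x m : P} (hm : m ∈ s)
    (hmin : ∀ y ∈ s, dist m x ≤ dist y x) : x -ᵥ m ∈ s.directionᗮ := by
  set π := orthogonalProjection s x
  have hpyth := dist_sq_eq_dist_orthogonalProjection_sq_add_dist_orthogonalProjection_sq x hm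
  have hle := hmin π π.2
  have hmπ : dist m π = 0 := by
    rw [dist_comm x] at hpyth
    nlinarith [dist_nonneg (x := m) (y := π), dist_nonneg (x := m) (y := x)]
  rw [dist_eq_zero.1 hmπ]
  exact vsub_orthogonalProjection_mem_direction_orthogonal s x

theorem orthogonalProjection_smul_vsub_orthogonalProjection_vadd {p c : P} (hc : c ∈ s) (r : ℝ) :
    (orthogonalProjection s (r • (p -ᵥ orthogonalProjection s p) +ᵥ c) : P) = c :=
  coe_orthogonalProjection_eq_iff_mem.2 ⟨hc, by
    simpa using s.directionᗮ.smul_mem r (vsub_orthogonalProjection_mem_direction_orthogonal s p)⟩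

theorem ite_wSameSide_infDist_smul_vsub_vadd {p c : P} (hp : p ∉ s) (hc : c ∈ s) (r : ℝ) :
    (if s.WSameSide (r • (p -ᵥ orthogonalProjection s p) +ᵥ c) p
      then Metric.infDist (r • (p -ᵥ orthogonalProjection s p) +ᵥ c) s
      else -Metric.infDist (r • (p -ᵥ orthogonalProjection s p) +ᵥ c) s)
      = r * Metric.infDist p s := by
  have hdist : Metric.infDist (r • (p -ᵥ orthogonalProjection s p) +ᵥ c) s
      = |r| * Metric.infDist p s := by
    rw [← dist_orthogonalProjection_eq_infDist, ← dist_orthogonalProjection_eq_infDist,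
      orthogonalProjection_smul_vsub_orthogonalProjection_vadd hc, dist_vadd_left, norm_smul,
      Real.norm_eq_abs, dist_eq_norm_vsub V]
  rcases le_or_gt 0 r with hr | hr
  · rw [if_pos (AffineSubspace.wSameSide_smul_vsub_vadd_left p (orthogonalProjection s p).2 hc hr),
      hdist, abs_of_nonneg hr]
  · rw [if_neg (AffineSubspace.sOppSide_smul_vsub_vadd_left hp (orthogonalProjection s p).2 hc
      hr).not_wSameSide, hdist, abs_of_neg hr, neg_mul, neg_neg]

end Euclidean

section WeightedNormal

variable {d : ℕ} {ω : EuclideanSpace ℝ (Fin d) → ℝ}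

local notation "𝔼" => EuclideanSpace ℝ (Fin d)

theorem wNormal_anti : Antitone (wNormal ω) :=
  fun _ _ hτσ _ hx a ha b hb => hx a (hτσ ha) b (hτσ hb)

theorem mem_wNormal_iff {τ : Finset 𝔼} {x y : 𝔼} (hx : x ∈ wNormal ω τ) :
    y ∈ wNormal ω τ ↔ y - x ∈ (vectorSpan ℝ (τ : Set 𝔼))ᗮ := by
  have hpower : ∀ a b, ‖y - a‖ ^ 2 - ‖y - b‖ ^ 2 = ‖x - a‖ ^ 2 - ‖x - b‖ ^ 2
      + 2 * inner ℝ (y - x) (b - a) := by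
    intro a b
    rw [← sub_add_sub_cancel y x a, ← sub_add_sub_cancel y x b, norm_add_sq_real,
      norm_add_sq_real, show b - a = (x - a) - (x - b) by abel]
    simp only [inner_sub_right]
    ring
  rw [vectorSpan_def, ← Submodule.span_singleton_le_iff_mem, ← Submodule.isOrtho_iff_le,
    Submodule.isOrtho_span]
  simp only [Set.mem_singleton_iff, forall_eq, Set.mem_vsub, vsub_eq_sub]
  constructor
  · rintro hy _ ⟨b, hb, a, ha, rfl⟩
    linarith [hpower a b, hx a ha b hb, hy a ha b hb]
  · intro h a ha b hb
    linarith [hpower a b, hx a ha b hb, h ⟨b, hb, a, ha, rfl⟩]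

theorem wNormal_eq_mk' {τ : Finset 𝔼} {x : 𝔼} (hx : x ∈ wNormal ω τ) :
    wNormal ω τ = AffineSubspace.mk' x (vectorSpan ℝ (τ : Set 𝔼))ᗮ := by
  ext y
  rw [mem_wNormal_iff hx, SetLike.mem_coe, AffineSubspace.mem_mk', vsub_eq_sub]

theorem mem_affineSpan_of_forall_power_le {τ : Finset 𝔼} {q c : 𝔼} (hq : q ∈ τ)
    (hc : c ∈ wNormal ω τ)
    (hmin : ∀ x ∈ wNormal ω τ, ‖c - q‖ ^ 2 - ω q ^ 2 ≤ ‖x - q‖ ^ 2 - ω q ^ 2) :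
    c ∈ affineSpan ℝ (τ : Set 𝔼) := by
  set N := AffineSubspace.mk' c (vectorSpan ℝ (τ : Set 𝔼))ᗮ
  have hcN : c ∈ N := AffineSubspace.self_mem_mk' _ _
  have : Nonempty N := ⟨⟨c, hcN⟩⟩
  have hqc : q -ᵥ c ∈ N.directionᗮ := by
    refine vsub_mem_direction_orthogonal_of_forall_dist_le hcN fun y hy => ?_
    have hy' : y ∈ wNormal ω τ := by rw [wNormal_eq_mk' hc]; exact hy
    rw [dist_eq_norm, dist_eq_norm]
    exact (pow_le_pow_iff_left₀ (norm_nonneg _) (norm_nonneg _) two_ne_zero).1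
      (by linarith [hmin y hy'])
  rw [AffineSubspace.direction_mk', Submodule.orthogonal_orthogonal,
    ← direction_affineSpan] at hqc
  exact (AffineSubspace.vsub_left_mem_direction_iff_mem (mem_affineSpan ℝ hq) c).1 hqc

theorem infDist_wNormal_eq_dist {τ : Finset 𝔼} [Nonempty (affineSpan ℝ (τ : Set 𝔼))] {c : 𝔼}
    (hc : c ∈ wNormal ω τ) (hcA : c ∈ affineSpan ℝ (τ : Set 𝔼)) (p : 𝔼) :
    Metric.infDist p (wNormal ω τ) =
      dist (orthogonalProjection (affineSpan ℝ (τ : Set 𝔼)) p : 𝔼) c := by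
  set A := affineSpan ℝ (τ : Set 𝔼)
  set π := orthogonalProjection A p
  have hdir : A.direction = vectorSpan ℝ (τ : Set 𝔼) := direction_affineSpan ℝ _
  rw [wNormal_eq_mk' hc]
  set N := AffineSubspace.mk' c (vectorSpan ℝ (τ : Set 𝔼))ᗮ
  have : Nonempty N := ⟨⟨c, AffineSubspace.self_mem_mk' _ _⟩⟩
  have hm : (p - π) + c ∈ N := by
    rw [AffineSubspace.mem_mk', vsub_eq_sub, add_sub_cancel_right, ← hdir]
    exact vsub_orthogonalProjection_mem_direction_orthogonal A p
  rw [infDist_eq_dist_of_vsub_mem_direction_orthogonal hm ?_, dist_eq_norm, dist_eq_norm]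
  · congr 1
    abel
  rw [AffineSubspace.direction_mk', vsub_eq_sub, show p - (p - π + c) = π - c by abel, ← hdir]
  exact Submodule.le_orthogonal_orthogonal _ (AffineSubspace.vsub_mem_direction π.2 hcA)

theorem exists_eq_smul_vsub_orthogonalProjection_vadd_of_mem_wNormal
    [DecidableEq 𝔼] {σ : Finset 𝔼} {p C Cp : 𝔼} [Nonempty (affineSpan ℝ (σ.erase p : Set 𝔼))]
    (hp : p ∈ σ) (hC : C ∈ wNormal ω σ) (hCσ : C ∈ affineSpan ℝ (σ : Set 𝔼))
    (hCp : Cp ∈ wNormal ω (σ.erase p)) (hCpA : Cp ∈ affineSpan ℝ (σ.erase p : Set 𝔼)) :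
    ∃ r : ℝ, C = r • (p -ᵥ orthogonalProjection (affineSpan ℝ (σ.erase p : Set 𝔼)) p) +ᵥ Cp := by
  set A := affineSpan ℝ (σ.erase p : Set 𝔼)
  set π := orthogonalProjection A p
  rw [← Finset.insert_erase hp, Finset.coe_insert, ← affineSpan_insert_affineSpan] at hCσ
  obtain ⟨r, c, hc, rfl⟩ := (AffineSubspace.mem_affineSpan_insert_iff π.2 p C).1 hCσ
  have hCCp := (mem_wNormal_iff hCp).1 (wNormal_anti (Finset.erase_subset p σ) hC)
  rw [← direction_affineSpan] at hCCp
  -- both `c` and `Cp` are the orthogonal projection of `C` onto `aff σ_p`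
  obtain rfl : c = Cp := (orthogonalProjection_smul_vsub_orthogonalProjection_vadd hc r).symm.trans
    (coe_orthogonalProjection_eq_iff_mem.2 ⟨hCpA, hCCp⟩)
  exact ⟨r, rfl⟩

end WeightedNormal

theorem pumping_equation_general
    (d : ℕ) (σ : Finset (EuclideanSpace ℝ (Fin d)))
    (hind : AffineIndependent ℝ ((↑) : {x // x ∈ σ} → EuclideanSpace ℝ (Fin d)))
    (ω : EuclideanSpace ℝ (Fin d) → ℝ)
    (p : EuclideanSpace ℝ (Fin d)) (hp : p ∈ σ)
    (q0 : EuclideanSpace ℝ (Fin d)) (hq0 : q0 ∈ σ.erase p)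
    -- the weighted center of `σ`: the point of `N_ω(σ)` of minimal power distance
    (C : EuclideanSpace ℝ (Fin d)) (hC : C ∈ wNormal ω σ)
    (hCmin : ∀ x ∈ wNormal ω σ, ‖C - p‖ ^ 2 - ω p ^ 2 ≤ ‖x - p‖ ^ 2 - ω p ^ 2)
    -- the weighted center of the face `σ_p = σ.erase p`
    (Cp : EuclideanSpace ℝ (Fin d)) (hCp : Cp ∈ wNormal ω (σ.erase p))
    (hCpmin : ∀ x ∈ wNormal ω (σ.erase p),
      ‖Cp - q0‖ ^ 2 - ω q0 ^ 2 ≤ ‖x - q0‖ ^ 2 - ω q0 ^ 2)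
    (D H F Rsq : ℝ)
    -- the altitude of `p`
    (hD : D = Metric.infDist p (affineSpan ℝ ((σ.erase p : Finset _) : Set (EuclideanSpace ℝ (Fin d)))))
    -- the squared weighted ortho-radius of `σ_p`
    (hRsq : Rsq = ‖Cp - q0‖ ^ 2 - ω q0 ^ 2)
    -- the excentricity: signed distance of `C_ω(σ)` from `aff(σ_p)`
    (hH : H = if (affineSpan ℝ ((σ.erase p : Finset _) : Set (EuclideanSpace ℝ (Fin d)))).WSameSide C p
        then Metric.infDist C (affineSpan ℝ ((σ.erase p : Finset _) : Set (EuclideanSpace ℝ (Fin d))))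
        else -Metric.infDist C (affineSpan ℝ ((σ.erase p : Finset _) : Set (EuclideanSpace ℝ (Fin d)))))
    (hF : F = D ^ 2 + (Metric.infDist p (wNormal ω (σ.erase p))) ^ 2 - Rsq) :
    2 * D * H = F - ω p ^ 2 := by
  set A := affineSpan ℝ (σ.erase p : Set (EuclideanSpace ℝ (Fin d)))
  have : Nonempty A := ⟨⟨q0, mem_affineSpan ℝ hq0⟩⟩
  set π := orthogonalProjection A p
  have hCpA : Cp ∈ A := mem_affineSpan_of_forall_power_le hq0 hCp hCpmin
  obtain ⟨r, rfl⟩ := exists_eq_smul_vsub_orthogonalProjection_vadd_of_mem_wNormal hp hC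
    (mem_affineSpan_of_forall_power_le hp hC hCmin) hCp hCpA
  have hDπ : D = dist p π := by rw [hD, dist_orthogonalProjection_eq_infDist]
  have hHr : H = r * D := by
    rw [hH, hD]
    exact ite_wSameSide_infDist_smul_vsub_vadd (hind.notMem_affineSpan_erase hp) hCpA r
  have hpπ : p -ᵥ π ∈ A.directionᗮ := vsub_orthogonalProjection_mem_direction_orthogonal A p
  have hCp_p := dist_sq_smul_orthogonal_vadd_smul_orthogonal_vadd hCpA π.2 r 1 hpπ
  have hCp_q0 :=
    dist_sq_smul_orthogonal_vadd_smul_orthogonal_vadd hCpA (mem_affineSpan ℝ hq0) r 0 hpπ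
  simp only [one_smul, vsub_vadd, zero_smul, zero_vadd, sub_zero, Real.norm_eq_abs,
    abs_mul_abs_self, ← dist_eq_norm_vsub] at hCp_p hCp_q0
  have hpow := hC p hp q0 (Finset.mem_of_mem_erase hq0)
  rw [← dist_eq_norm, ← dist_eq_norm] at hpow
  rw [hF, hRsq, hHr, hDπ, infDist_wNormal_eq_dist hCp hCpA, ← dist_eq_norm, dist_comm _ Cp]
  linear_combination -hpow + hCp_p - hCp_q0

/-- The pumping equation: `2 D(p,σ) H_ω(p,σ) = F_ω(p,σ) - ω(p)²`, where
`D(p,σ)` is the altitude of `p` in `σ`, `H_ω(p,σ)` is the signed distance of the weighted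
center `C_ω(σ)` from `aff(σ_p)` (positive on the side of `p`), and
`F_ω(p,σ) = D(p,σ)² + dist(p, N_ω(σ_p))² - R_ω(σ_p)²`. -/
theorem pumping_equation
    (d : ℕ) (σ : Finset (EuclideanSpace ℝ (Fin d)))
    (hind : AffineIndependent ℝ ((↑) : {x // x ∈ σ} → EuclideanSpace ℝ (Fin d)))
    (ω : EuclideanSpace ℝ (Fin d) → ℝ)
    (p : EuclideanSpace ℝ (Fin d)) (hp : p ∈ σ) (hcard : 2 ≤ σ.card)
    (q0 : EuclideanSpace ℝ (Fin d)) (hq0 : q0 ∈ σ.erase p)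
    -- the weighted center of `σ`: the point of `N_ω(σ)` of minimal power distance
    (C : EuclideanSpace ℝ (Fin d)) (hC : C ∈ wNormal ω σ)
    (hCmin : ∀ x ∈ wNormal ω σ, ‖C - p‖ ^ 2 - ω p ^ 2 ≤ ‖x - p‖ ^ 2 - ω p ^ 2)
    -- the weighted center of the face `σ_p = σ.erase p`
    (Cp : EuclideanSpace ℝ (Fin d)) (hCp : Cp ∈ wNormal ω (σ.erase p))
    (hCpmin : ∀ x ∈ wNormal ω (σ.erase p),
      ‖Cp - q0‖ ^ 2 - ω q0 ^ 2 ≤ ‖x - q0‖ ^ 2 - ω q0 ^ 2)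
    (D H F Rsq : ℝ)
    -- the altitude of `p`
    (hD : D = Metric.infDist p (affineSpan ℝ ((σ.erase p : Finset _) : Set (EuclideanSpace ℝ (Fin d)))))
    -- the squared weighted ortho-radius of `σ_p`
    (hRsq : Rsq = ‖Cp - q0‖ ^ 2 - ω q0 ^ 2)
    -- the excentricity: signed distance of `C_ω(σ)` from `aff(σ_p)`
    (hH : H = if (affineSpan ℝ ((σ.erase p : Finset _) : Set (EuclideanSpace ℝ (Fin d)))).WSameSide C p
        then Metric.infDist C (affineSpan ℝ ((σ.erase p : Finset _) : Set (EuclideanSpace ℝ (Fin d))))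
        else -Metric.infDist C (affineSpan ℝ ((σ.erase p : Finset _) : Set (EuclideanSpace ℝ (Fin d)))))
    (hF : F = D ^ 2 + (Metric.infDist p (wNormal ω (σ.erase p))) ^ 2 - Rsq) :
    2 * D * H = F - ω p ^ 2 :=
  pumping_equation_general d σ hind ω p hp q0 hq0 C hC hCmin Cp hCp hCpmin D H F Rsq hD hRsq hH hF
end
end

section
/- Let σ be a nondegenerate k-simplex in ℝ^d (k ≥ 1) with shortest edge length L(σ) ≥ λ > 0 and thickness Υ(σ) > 0, and let ξ₁, ξ₂ be weight assignments on the vertices of σ such that there exists a vertex p of σ with ξ₁(q) = ξ₂(q) for all vertices q ≠ p and |ξ₁(p)² − ξ₂(p)²| ≤ δ₀²λ². Then the weighted centers satisfy ‖C_{ξ₁}(σ) − C_{ξ₂}(σ)‖ ≤ δ₀²λ/(2Υ(σ)), and for every point r ∈ ℝ^d, |dist(r, N_{ξ₁}(σ)) − dist(r, N_{ξ₂}(σ))| ≤ δ₀²λ/(2Υ(σ)). -/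
noncomputable section

attribute [local instance] Classical.propDecidable

open Metric RealInnerProductSpace

/-!
Both weighted normal spaces are affine subspaces with direction `(vectorSpan σ)ᗮ`, so the second
one is the translate of the first by `w = C₂ - C₁`, and the bound on `‖w‖` bounds the change of
`infDist r`. Each center is the orthogonal projection of `p` onto its normal space, so
`w ∈ vectorSpan σ`. As the weights agree off `p`, `w` is orthogonal to the facet `σ_p`, and
`2⟪w, p - q⟫ = ξ₁(p)² - ξ₂(p)²` for every `q ∈ σ_p`. Hence `w` is parallel to the altitude from `p`,
which gives `‖w‖ · D(p, σ) ≤ |ξ₁(p)² - ξ₂(p)²| / 2`, while `D(p, σ) ≥ k Δ(σ) Υ(σ) ≥ λ Υ(σ)`.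
-/

theorem inf'_offDiag_le_sup'_product {α β : Type*} [LinearOrder β] (s : Finset α)
    (hoff : s.offDiag.Nonempty) (hprod : (s ×ˢ s).Nonempty) (f : α × α → β) :
    s.offDiag.inf' hoff f ≤ (s ×ˢ s).sup' hprod f := by
  obtain ⟨x, hx⟩ := hoff
  have hx' := Finset.mem_offDiag.1 hx
  exact (Finset.inf'_le f hx).trans (Finset.le_sup' f (Finset.mem_product.2 ⟨hx'.1, hx'.2.1⟩))

theorem mul_le_of_eq_inf'_div {ι : Type*} {s : Finset ι} (hs : s.Nonempty) {f : ι → ℝ}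
    {a c t : ℝ} (ht : t = s.inf' hs f / c) (ht_nonneg : 0 ≤ t) (ha : 0 < a) (hac : a ≤ c)
    {i : ι} (hi : i ∈ s) : t * a ≤ f i :=
  calc t * a ≤ t * c := by gcongr
    _ = s.inf' hs f := by rw [ht, div_mul_cancel₀ _ (ha.trans_le hac).ne']
    _ ≤ f i := Finset.inf'_le f hi

theorem abs_infDist_sub_infDist_image_add_le {E : Type*} [SeminormedAddCommGroup E]
    (s : Set E) (r w : E) : |infDist r s - infDist r ((· + w) '' s)| ≤ ‖w‖ := by
  have htrans : infDist r ((· + w) '' s) = infDist (r - w) s := by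
    conv_lhs => rw [← sub_add_cancel r w]
    exact infDist_image (isometry_add_right w)
  rw [htrans, ← Real.dist_eq]
  simpa [dist_eq_norm] using (lipschitz_infDist_pt s).dist_le_mul r (r - w)

section InnerProductSpace

variable {V : Type*} [NormedAddCommGroup V] [InnerProductSpace ℝ V]

theorem mem_orthogonal_vectorSpan_iff {s : Set V} {w : V} :
    w ∈ (vectorSpan ℝ s)ᗮ ↔ ∀ a ∈ s, ∀ b ∈ s, ⟪w, b - a⟫ = 0 := by
  rw [← Submodule.span_singleton_le_iff_mem, ← Submodule.isOrtho_iff_le, vectorSpan_def,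
    Submodule.isOrtho_span]
  simp only [Set.mem_singleton_iff, forall_eq, Set.mem_vsub, vsub_eq_sub]
  constructor
  · intro h a ha b hb
    exact h ⟨b, hb, a, ha, rfl⟩
  · rintro h _ ⟨b, hb, a, ha, rfl⟩
    exact h a ha b hb

theorem inner_eq_zero_of_forall_norm_sub_sq_le {m q u : V}
    (h : ∀ t : ℝ, ‖m - q‖ ^ 2 ≤ ‖m + t • u - q‖ ^ 2) : ⟪u, m - q⟫ = 0 := by
  have hquad : ∀ t : ℝ, 0 ≤ ‖u‖ ^ 2 * (t * t) + 2 * ⟪u, m - q⟫ * t + 0 := fun t => by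
    have := h t
    rw [add_sub_right_comm, norm_add_sq_real, norm_smul, real_inner_smul_right, real_inner_comm,
      Real.norm_eq_abs, mul_pow, sq_abs] at this
    linarith
  have := discrim_le_zero hquad
  rw [discrim] at this
  nlinarith [sq_nonneg ⟪u, m - q⟫]

theorem norm_mul_infDist_le_abs_inner {A : AffineSubspace ℝ V}
    [A.direction.HasOrthogonalProjection] {p q w : V} (hq : q ∈ A)
    (hw : w ∈ (affineSpan ℝ (insert p (A : Set V))).direction) (hwA : w ∈ A.directionᗮ) :
    ‖w‖ * infDist p A ≤ |⟪w, p - q⟫| := by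
  have : Nonempty A := ⟨⟨q, hq⟩⟩
  set m : V := ↑(EuclideanGeometry.orthogonalProjection A p)
  have hmA : m ∈ A := EuclideanGeometry.orthogonalProjection_mem p
  have hpm : p - m ∈ A.directionᗮ :=
    EuclideanGeometry.vsub_orthogonalProjection_mem_direction_orthogonal A p
  have hw_span : w ∈ ℝ ∙ (p - m) := by
    rw [AffineSubspace.direction_affineSpan_insert hmA] at hw
    have : (ℝ ∙ (p - m) ⊔ A.direction) ⊓ A.directionᗮ = ℝ ∙ (p - m) := by
      rw [sup_inf_assoc_of_le _ ((Submodule.span_singleton_le_iff_mem _ _).2 hpm),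
        Submodule.inf_orthogonal_eq_bot, sup_bot_eq]
    exact this ▸ Submodule.mem_inf.2 ⟨hw, hwA⟩
  obtain ⟨t, rfl⟩ := Submodule.mem_span_singleton.1 hw_span
  have hmq : ⟪p - m, m - q⟫ = 0 :=
    (Submodule.mem_orthogonal' _ _).1 hpm _ (AffineSubspace.vsub_mem_direction hmA hq)
  have hinner : ⟪t • (p - m), p - q⟫ = t * ‖p - m‖ ^ 2 := by
    rw [← sub_add_sub_cancel p m q, real_inner_smul_left, inner_add_right, hmq, add_zero,
      real_inner_self_eq_norm_sq]
  have hdist : infDist p A ≤ ‖p - m‖ := by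
    simpa [dist_eq_norm] using infDist_le_dist_of_mem hmA
  calc ‖t • (p - m)‖ * infDist p A ≤ ‖t • (p - m)‖ * ‖p - m‖ := by gcongr
    _ = |⟪t • (p - m), p - q⟫| := by
      rw [hinner, norm_smul, Real.norm_eq_abs, abs_mul, abs_of_nonneg (sq_nonneg ‖p - m‖)]; ring

end InnerProductSpace

section wNormal

variable {d : ℕ} {ω ω' : EuclideanSpace ℝ (Fin d) → ℝ} {τ : Finset (EuclideanSpace ℝ (Fin d))}
  {x y : EuclideanSpace ℝ (Fin d)}

theorem mem_wNormal_iff_inner : x ∈ wNormal ω τ ↔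
    ∀ a ∈ τ, ∀ b ∈ τ, 2 * ⟪x, b - a⟫ = (ω a ^ 2 - ‖a‖ ^ 2) - (ω b ^ 2 - ‖b‖ ^ 2) := by
  refine forall₂_congr fun a _ => forall₂_congr fun b _ => ?_
  rw [norm_sub_sq_real, norm_sub_sq_real, inner_sub_right]
  constructor <;> intro h <;> linarith

theorem two_mul_inner_sub_of_mem_wNormal (hx : x ∈ wNormal ω τ) (hy : y ∈ wNormal ω' τ)
    {a b : EuclideanSpace ℝ (Fin d)} (ha : a ∈ τ) (hb : b ∈ τ) :
    2 * ⟪y - x, b - a⟫ = (ω' a ^ 2 - ω a ^ 2) - (ω' b ^ 2 - ω b ^ 2) := by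
  have hx' := mem_wNormal_iff_inner.1 hx a ha b hb
  have hy' := mem_wNormal_iff_inner.1 hy a ha b hb
  rw [inner_sub_left]
  linarith

theorem add_mem_wNormal (hx : x ∈ wNormal ω τ) {v : EuclideanSpace ℝ (Fin d)}
    (hv : ∀ a ∈ τ, ∀ b ∈ τ, 2 * ⟪v, b - a⟫ = (ω' a ^ 2 - ω a ^ 2) - (ω' b ^ 2 - ω b ^ 2)) :
    x + v ∈ wNormal ω' τ := by
  refine mem_wNormal_iff_inner.2 fun a ha b hb => ?_
  have hx' := mem_wNormal_iff_inner.1 hx a ha b hb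
  have hv' := hv a ha b hb
  rw [inner_add_left]
  linarith

theorem wNormal_eq_image_add (hx : x ∈ wNormal ω τ) (hy : y ∈ wNormal ω' τ) :
    wNormal ω' τ = (· + (y - x)) '' wNormal ω τ := by
  ext z
  constructor
  · intro hz
    refine ⟨z + -(y - x), add_mem_wNormal hz fun a ha b hb => ?_, neg_add_cancel_right z _⟩
    rw [inner_neg_left]
    linarith [two_mul_inner_sub_of_mem_wNormal hx hy ha hb]
  · rintro ⟨z, hz, rfl⟩
    exact add_mem_wNormal hz fun a ha b hb => two_mul_inner_sub_of_mem_wNormal hx hy ha hb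

theorem sub_mem_vectorSpan_of_forall_norm_sub_sq_le (hx : x ∈ wNormal ω τ)
    (hmin : ∀ z ∈ wNormal ω τ, ‖x - y‖ ^ 2 ≤ ‖z - y‖ ^ 2) :
    x - y ∈ vectorSpan ℝ (τ : Set (EuclideanSpace ℝ (Fin d))) := by
  rw [← Submodule.orthogonal_orthogonal (vectorSpan ℝ _), Submodule.mem_orthogonal]
  intro u hu
  have hu' := mem_orthogonal_vectorSpan_iff.1 hu
  refine inner_eq_zero_of_forall_norm_sub_sq_le fun t => hmin _ (add_mem_wNormal hx ?_)
  intro a ha b hb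
  rw [real_inner_smul_left, hu' a ha b hb]
  ring

theorem norm_sub_mul_infDist_le_abs_sq_sub_sq {p q : EuclideanSpace ℝ (Fin d)}
    (hx : x ∈ wNormal ω τ) (hy : y ∈ wNormal ω' τ)
    (hxmin : ∀ z ∈ wNormal ω τ, ‖x - p‖ ^ 2 ≤ ‖z - p‖ ^ 2)
    (hymin : ∀ z ∈ wNormal ω' τ, ‖y - p‖ ^ 2 ≤ ‖z - p‖ ^ 2)
    (hp : p ∈ τ) (hq : q ∈ τ.erase p) (heq : ∀ a ∈ τ, a ≠ p → ω a = ω' a) :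
    ‖y - x‖ * infDist p (affineSpan ℝ ((τ.erase p : Finset _) : Set (EuclideanSpace ℝ (Fin d))))
      ≤ |ω p ^ 2 - ω' p ^ 2| / 2 := by
  set A := affineSpan ℝ ((τ.erase p : Finset _) : Set (EuclideanSpace ℝ (Fin d)))
  have hspan : y - x ∈ (affineSpan ℝ (insert p (A : Set _))).direction := by
    rw [affineSpan_insert_affineSpan, ← Finset.coe_insert, Finset.insert_erase hp,
      direction_affineSpan, ← sub_sub_sub_cancel_right y x p]
    exact sub_mem (sub_mem_vectorSpan_of_forall_norm_sub_sq_le hy hymin)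
      (sub_mem_vectorSpan_of_forall_norm_sub_sq_le hx hxmin)
  have horth : y - x ∈ A.directionᗮ := by
    rw [direction_affineSpan]
    refine mem_orthogonal_vectorSpan_iff.2 fun a ha b hb => ?_
    obtain ⟨hap, ha⟩ := Finset.mem_erase.1 ha
    obtain ⟨hbp, hb⟩ := Finset.mem_erase.1 hb
    have := two_mul_inner_sub_of_mem_wNormal hx hy ha hb
    rw [heq a ha hap, heq b hb hbp] at this
    linarith
  have hinner : 2 * ⟪y - x, p - q⟫ = ω p ^ 2 - ω' p ^ 2 := by
    obtain ⟨hqp, hq⟩ := Finset.mem_erase.1 hq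
    rw [two_mul_inner_sub_of_mem_wNormal hx hy hq hp, heq q hq hqp]
    ring
  have hkey := norm_mul_infDist_le_abs_inner (subset_affineSpan ℝ _ hq) hspan horth
  rw [← hinner, abs_mul, abs_two]
  linarith

end wNormal

theorem weighted_center_stability_general
    (d k : ℕ) (hk : 1 ≤ k)
    (σ : Finset (EuclideanSpace ℝ (Fin d))) (hcard : σ.card = k + 1)
    (hσne : σ.Nonempty) (hprod : (σ ×ˢ σ).Nonempty) (hoff : σ.offDiag.Nonempty)
    (lam δ0 : ℝ) (hlam : 0 < lam)
    (Δ Lmin Υ : ℝ)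
    -- `Δ(σ)`: the diameter (longest edge length) of `σ`
    (hΔ : Δ = (σ ×ˢ σ).sup' hprod fun pq => dist pq.1 pq.2)
    -- `L(σ)`: the shortest edge length of `σ`
    (hLmin : Lmin = σ.offDiag.inf' hoff fun pq => dist pq.1 pq.2)
    (hL : lam ≤ Lmin)
    -- `Υ(σ)`: the thickness of `σ`
    (hΥ : Υ = (σ.inf' hσne fun p =>
        Metric.infDist p (affineSpan ℝ ((σ.erase p : Finset _) : Set (EuclideanSpace ℝ (Fin d)))))
      / (k * Δ))
    (hΥpos : 0 < Υ)
    (ξ1 ξ2 : EuclideanSpace ℝ (Fin d) → ℝ)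
    (p : EuclideanSpace ℝ (Fin d)) (hp : p ∈ σ)
    (heq : ∀ q ∈ σ, q ≠ p → ξ1 q = ξ2 q)
    (hdiff : |ξ1 p ^ 2 - ξ2 p ^ 2| ≤ δ0 ^ 2 * lam ^ 2)
    -- the weighted centers of `σ` for the two weight assignments
    (C1 C2 : EuclideanSpace ℝ (Fin d))
    (hC1 : C1 ∈ wNormal ξ1 σ)
    (hC1min : ∀ x ∈ wNormal ξ1 σ, ‖C1 - p‖ ^ 2 - ξ1 p ^ 2 ≤ ‖x - p‖ ^ 2 - ξ1 p ^ 2)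
    (hC2 : C2 ∈ wNormal ξ2 σ)
    (hC2min : ∀ x ∈ wNormal ξ2 σ, ‖C2 - p‖ ^ 2 - ξ2 p ^ 2 ≤ ‖x - p‖ ^ 2 - ξ2 p ^ 2) :
    ‖C1 - C2‖ ≤ δ0 ^ 2 * lam / (2 * Υ) ∧
    ∀ r : EuclideanSpace ℝ (Fin d),
      |Metric.infDist r (wNormal ξ1 σ) - Metric.infDist r (wNormal ξ2 σ)| ≤
        δ0 ^ 2 * lam / (2 * Υ) := by
  obtain ⟨q, hq⟩ : (σ.erase p).Nonempty := by
    rw [← Finset.card_pos, Finset.card_erase_of_mem hp]; omega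
  have hkey := norm_sub_mul_infDist_le_abs_sq_sub_sq hC1 hC2
    (fun x hx => by linarith [hC1min x hx]) (fun x hx => by linarith [hC2min x hx]) hp hq heq
  have hΔ_ge : lam ≤ Δ := hL.trans (hLmin ▸ hΔ ▸ inf'_offDiag_le_sup'_product σ hoff hprod _)
  have hkΔ_ge : lam ≤ k * Δ :=
    hΔ_ge.trans (le_mul_of_one_le_left (hlam.le.trans hΔ_ge) (by exact_mod_cast hk))
  have halt := mul_le_of_eq_inf'_div hσne hΥ hΥpos.le hlam hkΔ_ge hp
  have hw_le : ‖C2 - C1‖ ≤ δ0 ^ 2 * lam / (2 * Υ) := by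
    rw [le_div_iff₀ (by positivity), ← mul_le_mul_iff_of_pos_right hlam]
    calc ‖C2 - C1‖ * (2 * Υ) * lam = 2 * (‖C2 - C1‖ * (Υ * lam)) := by ring
      _ ≤ 2 * (‖C2 - C1‖ * Metric.infDist p _) := by gcongr
      _ ≤ δ0 ^ 2 * lam * lam := by linarith
  refine ⟨norm_sub_rev C1 C2 ▸ hw_le, fun r => ?_⟩
  rw [wNormal_eq_image_add hC1 hC2]
  exact (abs_infDist_sub_infDist_image_add_le _ r _).trans hw_le

/-- Stability of weighted centers and weighted normal spaces of a thick simplex under an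
elementary perturbation of the weight of one vertex. -/
theorem weighted_center_stability
    (d k : ℕ) (hk : 1 ≤ k)
    (σ : Finset (EuclideanSpace ℝ (Fin d))) (hcard : σ.card = k + 1)
    (hind : AffineIndependent ℝ ((↑) : {x // x ∈ σ} → EuclideanSpace ℝ (Fin d)))
    (hσne : σ.Nonempty) (hprod : (σ ×ˢ σ).Nonempty) (hoff : σ.offDiag.Nonempty)
    (lam δ0 : ℝ) (hlam : 0 < lam)
    (Δ Lmin Υ : ℝ)
    -- `Δ(σ)`: the diameter (longest edge length) of `σ`
    (hΔ : Δ = (σ ×ˢ σ).sup' hprod fun pq => dist pq.1 pq.2)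
    -- `L(σ)`: the shortest edge length of `σ`
    (hLmin : Lmin = σ.offDiag.inf' hoff fun pq => dist pq.1 pq.2)
    (hL : lam ≤ Lmin)
    -- `Υ(σ)`: the thickness of `σ`
    (hΥ : Υ = (σ.inf' hσne fun p =>
        Metric.infDist p (affineSpan ℝ ((σ.erase p : Finset _) : Set (EuclideanSpace ℝ (Fin d)))))
      / (k * Δ))
    (hΥpos : 0 < Υ)
    (ξ1 ξ2 : EuclideanSpace ℝ (Fin d) → ℝ)
    (hξ1 : ∀ q ∈ σ, 0 ≤ ξ1 q) (hξ2 : ∀ q ∈ σ, 0 ≤ ξ2 q)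
    (p : EuclideanSpace ℝ (Fin d)) (hp : p ∈ σ)
    (heq : ∀ q ∈ σ, q ≠ p → ξ1 q = ξ2 q)
    (hdiff : |ξ1 p ^ 2 - ξ2 p ^ 2| ≤ δ0 ^ 2 * lam ^ 2)
    -- the weighted centers of `σ` for the two weight assignments
    (C1 C2 : EuclideanSpace ℝ (Fin d))
    (hC1 : C1 ∈ wNormal ξ1 σ)
    (hC1min : ∀ x ∈ wNormal ξ1 σ, ‖C1 - p‖ ^ 2 - ξ1 p ^ 2 ≤ ‖x - p‖ ^ 2 - ξ1 p ^ 2)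
    (hC2 : C2 ∈ wNormal ξ2 σ)
    (hC2min : ∀ x ∈ wNormal ξ2 σ, ‖C2 - p‖ ^ 2 - ξ2 p ^ 2 ≤ ‖x - p‖ ^ 2 - ξ2 p ^ 2) :
    ‖C1 - C2‖ ≤ δ0 ^ 2 * lam / (2 * Υ) ∧
    ∀ r : EuclideanSpace ℝ (Fin d),
      |Metric.infDist r (wNormal ξ1 σ) - Metric.infDist r (wNormal ξ2 σ)| ≤
        δ0 ^ 2 * lam / (2 * Υ) :=
  weighted_center_stability_general d k hk σ hcard hσne hprod hoff lam δ0 hlam Δ Lmin Υ hΔ hLmin hL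
    hΥ hΥpos ξ1 ξ2 p hp heq hdiff C1 C2 hC1 hC1min hC2 hC2min
end
end

section
/- Let σ = [p₀, …, p_j] be a nondegenerate j-simplex in ℝ^m with j ≥ 1 (its vertices are affinely independent), and let P be the m × j real matrix whose i-th column is p_i − p₀. Then the smallest singular value of P satisfies σ_j(P) ≥ √j · Υ(σ) · Δ(σ); equivalently, ‖Px‖ ≥ √j · Υ(σ) · Δ(σ) · ‖x‖ for all x ∈ ℝ^j. -/
/-!
Write `Px = ∑ᵢ xᵢ (pᵢ₊₁ - p₀)` and let `k` be an index of a largest coordinate `|xₖ|`, so that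
`‖x‖ ≤ √j |xₖ|`. All summands but the `k`-th lie in the direction of the facet opposite `pₖ₊₁`,
which contains `p₀`; hence `Px / xₖ` is `pₖ₊₁` minus a point of that facet, and
`‖Px‖ ≥ |xₖ| D(pₖ₊₁, σ) ≥ |xₖ| · min D = |xₖ| · jΥΔ ≥ √j ΥΔ ‖x‖`.
-/

open Metric

theorem Matrix.toEuclideanLin_eq_sum_smul {𝕜 m n : Type*} [RCLike 𝕜] [Fintype n] [DecidableEq n]
    (P : Matrix m n 𝕜) (v : n → EuclideanSpace 𝕜 m) (hP : ∀ a i, P a i = v i a)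
    (x : EuclideanSpace 𝕜 n) : Matrix.toEuclideanLin P x = ∑ i, x i • v i := by
  ext a
  simp [Matrix.toLpLin_apply, Matrix.mulVec, dotProduct, hP, mul_comm]

theorem EuclideanSpace.exists_norm_le_sqrt_card_mul_abs {ι : Type*} [Fintype ι] [Nonempty ι]
    (x : EuclideanSpace ℝ ι) : ∃ k, ‖x‖ ≤ √(Fintype.card ι) * |x k| := by
  obtain ⟨k, hk⟩ := Finite.exists_max fun i => |x i|
  refine ⟨k, ?_⟩
  have hsum : ∑ i, ‖x i‖ ^ 2 ≤ Fintype.card ι * |x k| ^ 2 := by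
    calc ∑ i, ‖x i‖ ^ 2 ≤ ∑ _i : ι, |x k| ^ 2 :=
          Finset.sum_le_sum fun i _ => pow_le_pow_left₀ (abs_nonneg (x i)) (hk i) 2
      _ = Fintype.card ι * |x k| ^ 2 := by simp
  calc ‖x‖ = √(∑ i, ‖x i‖ ^ 2) := EuclideanSpace.norm_eq x
    _ ≤ √(Fintype.card ι * |x k| ^ 2) := Real.sqrt_le_sqrt hsum
    _ = √(Fintype.card ι) * |x k| := by
      rw [Real.sqrt_mul (Nat.cast_nonneg _), Real.sqrt_sq (abs_nonneg _)]

section Altitude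

variable {V Q : Type*} [NormedAddCommGroup V] [NormedSpace ℝ V] [MetricSpace Q]
  [NormedAddTorsor V Q]

theorem abs_mul_infDist_le_norm_smul_vsub_add {A : AffineSubspace ℝ Q} {q : Q} (hq : q ∈ A)
    {w : V} (hw : w ∈ A.direction) (p : Q) (c : ℝ) :
    |c| * infDist p A ≤ ‖c • (p -ᵥ q) + w‖ := by
  rcases eq_or_ne c 0 with rfl | hc
  · simp
  have hq' : (-c⁻¹) • w +ᵥ q ∈ A :=
    AffineSubspace.vadd_mem_of_mem_direction (A.direction.smul_mem _ hw) hq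
  have hdecomp : c • (p -ᵥ q) + w = c • (p -ᵥ ((-c⁻¹) • w +ᵥ q)) := by
    rw [vsub_vadd_eq_vsub_sub, smul_sub, smul_smul, mul_neg, mul_inv_cancel₀ hc]
    simp
  rw [hdecomp, norm_smul, Real.norm_eq_abs, ← dist_eq_norm_vsub]
  exact mul_le_mul_of_nonneg_left (infDist_le_dist_of_mem hq') (abs_nonneg c)

theorem abs_mul_infDist_facet_le_norm_sum_smul_vsub {n : ℕ} (p : Fin (n + 1) → Q)
    (x : Fin n → ℝ) (k : Fin n) :
    |x k| * infDist (p k.succ) (affineSpan ℝ (p '' {l | l ≠ k.succ})) ≤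
      ‖∑ i, x i • (p i.succ -ᵥ p 0)‖ := by
  set A := affineSpan ℝ (p '' {l | l ≠ k.succ})
  have hmem : ∀ l, l ≠ k.succ → p l ∈ A := fun l hl => subset_affineSpan ℝ _ ⟨l, hl, rfl⟩
  have hp₀ : p 0 ∈ A := hmem 0 (Fin.succ_ne_zero k).symm
  have hrest : ∑ i ∈ Finset.univ.erase k, x i • (p i.succ -ᵥ p 0) ∈ A.direction :=
    Submodule.sum_mem _ fun i hi => Submodule.smul_mem _ _ <|
      AffineSubspace.vsub_mem_direction
        (hmem _ fun h => Finset.ne_of_mem_erase hi (Fin.succ_injective _ h)) hp₀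
  rw [← Finset.add_sum_erase _ _ (Finset.mem_univ k)]
  exact abs_mul_infDist_le_norm_smul_vsub_add hp₀ hrest _ _

end Altitude

theorem singular_value_lower_bound_general
    (m j : ℕ)
    (p : Fin (j + 1) → EuclideanSpace ℝ (Fin m))
    (P : Matrix (Fin m) (Fin j) ℝ)
    (hP : ∀ (a : Fin m) (i : Fin j), P a i = (p i.succ - p 0) a)
    (Δ Υ : ℝ)
    -- `Υ(σ)`: the thickness, `min_i D(p i, σ) / (j Δ(σ))` where `D` is the altitude
    (hΥ : Υ = (⨅ i, Metric.infDist (p i) (affineSpan ℝ (p '' {l | l ≠ i}))) / (j * Δ)) :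
    ∀ x : EuclideanSpace ℝ (Fin j),
      Real.sqrt j * Υ * Δ * ‖x‖ ≤ ‖Matrix.toEuclideanLin P x‖ := by
  intro x
  cases isEmpty_or_nonempty (Fin j)
  · simp [Subsingleton.elim x 0]
  obtain ⟨k, hk⟩ := EuclideanSpace.exists_norm_le_sqrt_card_mul_abs x
  rw [Fintype.card_fin] at hk
  set D := ⨅ i, infDist (p i) (affineSpan ℝ (p '' {l | l ≠ i}))
  have hD : 0 ≤ D := Real.iInf_nonneg fun _ => infDist_nonneg
  have hDk : D ≤ infDist (p k.succ) (affineSpan ℝ (p '' {l | l ≠ k.succ})) :=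
    ciInf_le ⟨0, Set.forall_mem_range.mpr fun _ => infDist_nonneg⟩ k.succ
  have hsqrt : 0 < √(j : ℝ) := Real.sqrt_pos.mpr (Nat.cast_pos.mpr Fin.pos')
  have hscale : √j * Υ * Δ ≤ D / √j := by
    rcases eq_or_ne Δ 0 with rfl | hΔ
    · simpa using div_nonneg hD hsqrt.le
    rw [hΥ]
    field_simp
    rw [Real.sq_sqrt (Nat.cast_nonneg j)]
    exact (mul_div_cancel_left₀ D (Nat.cast_ne_zero.mpr Fin.pos'.ne')).le
  calc √j * Υ * Δ * ‖x‖ ≤ D / √j * (√j * |x k|) :=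
        mul_le_mul hscale hk (norm_nonneg x) (div_nonneg hD hsqrt.le)
    _ = |x k| * D := by field_simp
    _ ≤ |x k| * infDist (p k.succ) (affineSpan ℝ (p '' {l | l ≠ k.succ})) :=
        mul_le_mul_of_nonneg_left hDk (abs_nonneg _)
    _ ≤ ‖∑ i, x i • (p i.succ -ᵥ p 0)‖ := abs_mul_infDist_facet_le_norm_sum_smul_vsub p x k
    _ = ‖Matrix.toEuclideanLin P x‖ := by rw [Matrix.toEuclideanLin_eq_sum_smul P _ hP x]; rfl

/-- The smallest singular value of the matrix of edge vectors of a nondegenerate simplex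
is at least `√j · Υ(σ) · Δ(σ)`. -/
theorem singular_value_lower_bound
    (m j : ℕ) (hj : 1 ≤ j)
    (p : Fin (j + 1) → EuclideanSpace ℝ (Fin m))
    (hind : AffineIndependent ℝ p)
    (P : Matrix (Fin m) (Fin j) ℝ)
    (hP : ∀ (a : Fin m) (i : Fin j), P a i = (p i.succ - p 0) a)
    (Δ Υ : ℝ)
    -- `Δ(σ)`: the diameter (longest edge length)
    (hΔ : Δ = ⨆ i, ⨆ l, dist (p i) (p l))
    -- `Υ(σ)`: the thickness, `min_i D(p i, σ) / (j Δ(σ))` where `D` is the altitude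
    (hΥ : Υ = (⨅ i, Metric.infDist (p i) (affineSpan ℝ (p '' {l | l ≠ i}))) / (j * Δ)) :
    ∀ x : EuclideanSpace ℝ (Fin j),
      Real.sqrt j * Υ * Δ * ‖x‖ ≤ ‖Matrix.toEuclideanLin P x‖ :=
  singular_value_lower_bound_general m j p P hP Δ Υ hΥ
end

section
/- Let U and V be k-dimensional linear subspaces of ℝ^d and α ∈ [0, π/2) such that every unit vector u ∈ U satisfies dist(u, V) ≤ sin α (i.e., the angle between U and V is at most α). Let f be the orthogonal projection of ℝ^d onto V, restricted to U. Then (1) f : U → V is bijective, and (2) for every r > 0, the image f(U ∩ B(0, r)) contains V ∩ B(0, r·cos α), where B(0, r) is the closed ball of radius r. -/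
/-!
Rescaling the angle hypothesis gives `‖u - P u‖ ≤ sin α * ‖u‖` on `U`, where `P` is the orthogonal
projection onto `V`, so Pythagoras gives `cos α * ‖u‖ ≤ ‖P u‖`. Since `cos α > 0`, `P` is injective
on `U`, hence bijective onto `V` as the dimensions agree, and the preimage of `v ∈ V` with
`‖v‖ ≤ r cos α` has norm at most `r`.
-/

open Metric Module

namespace Submodule

variable {𝕜 E : Type*} [RCLike 𝕜] [NormedAddCommGroup E] [InnerProductSpace 𝕜 E]
  {U K : Submodule 𝕜 E} [K.HasOrthogonalProjection]

theorem infDist_eq_norm_sub_starProjection (x : E) : infDist x K = ‖x - K.starProjection x‖ := by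
  rw [infDist_eq_iInf, starProjection_minimal]
  simp only [dist_eq_norm]
  rfl

theorem norm_sub_starProjection_le_mul_norm {s : ℝ}
    (hU : ∀ u ∈ U, ‖u‖ = 1 → infDist u K ≤ s) {u : E} (hu : u ∈ U) :
    ‖u - K.starProjection u‖ ≤ s * ‖u‖ := by
  rcases eq_or_ne u 0 with rfl | hu0
  · simp
  have hnorm : 0 < ‖u‖ := norm_pos_iff.mpr hu0
  set a : 𝕜 := ((‖u‖⁻¹ : ℝ) : 𝕜)
  have ha : ‖a‖ = ‖u‖⁻¹ := by simp [a]
  have hunit : ‖a • u‖ = 1 := by rw [norm_smul, ha, inv_mul_cancel₀ hnorm.ne']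
  have hscaled := hU _ (U.smul_mem a hu) hunit
  rw [infDist_eq_norm_sub_starProjection, map_smul, ← smul_sub, norm_smul, ha,
    inv_mul_le_iff₀ hnorm] at hscaled
  linarith

theorem cos_mul_norm_le_norm_starProjection {α : ℝ} {x : E}
    (hx : ‖x - K.starProjection x‖ ≤ Real.sin α * ‖x‖) :
    Real.cos α * ‖x‖ ≤ ‖K.starProjection x‖ := by
  have hpyth : ‖x‖ ^ 2 = ‖K.starProjection x‖ ^ 2 + ‖x - K.starProjection x‖ ^ 2 := by
    rw [← starProjection_orthogonal_val]
    exact K.norm_sq_eq_add_norm_sq_starProjection x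
  have hsq : (Real.cos α * ‖x‖) ^ 2 ≤ ‖K.starProjection x‖ ^ 2 := by
    have := pow_le_pow_left₀ (norm_nonneg _) hx 2
    nlinarith [Real.sin_sq_add_cos_sq α]
  exact abs_le_of_sq_le_sq' hsq (norm_nonneg _) |>.2

theorem bijective_orthogonalProjectionOnto_comp_subtype [FiniteDimensional 𝕜 U]
    [FiniteDimensional 𝕜 K] (hrank : finrank 𝕜 U = finrank 𝕜 K) {c : ℝ} (hc : 0 < c)
    (hbound : ∀ u ∈ U, c * ‖u‖ ≤ ‖K.starProjection u‖) :
    Function.Bijective (fun u : U => K.orthogonalProjectionOnto u) := by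
  let f : U →ₗ[𝕜] K := K.orthogonalProjectionOnto.toLinearMap ∘ₗ U.subtype
  have hinj : Function.Injective f := by
    refine (injective_iff_map_eq_zero f).mpr fun u hu => norm_eq_zero.mp ?_
    have := hbound u u.2
    rw [starProjection_apply, show K.orthogonalProjectionOnto u = 0 from hu, coe_zero,
      norm_zero] at this
    exact le_antisymm (nonpos_of_mul_nonpos_right this hc) (norm_nonneg _)
  exact ⟨hinj, (LinearMap.injective_iff_surjective_of_finrank_eq_finrank hrank).mp hinj⟩

theorem inter_closedBall_subset_image_starProjection
    (hsurj : Function.Surjective (fun u : U => K.orthogonalProjectionOnto u)) {c : ℝ}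
    (hc : 0 < c) (hbound : ∀ u ∈ U, c * ‖u‖ ≤ ‖K.starProjection u‖) (r : ℝ) :
    (K : Set E) ∩ closedBall 0 (r * c) ⊆ K.starProjection '' ((U : Set E) ∩ closedBall 0 r) := by
  rintro v ⟨hvK, hv⟩
  obtain ⟨u, hu⟩ := hsurj ⟨v, hvK⟩
  have hproj : K.starProjection u = v := congrArg Subtype.val hu
  refine ⟨u, ⟨u.2, ?_⟩, hproj⟩
  rw [mem_closedBall_zero_iff] at hv ⊢
  have := hbound u u.2
  rw [hproj] at this
  nlinarith

end Submodule

/-- If `U` and `V` are `k`-dimensional subspaces of `ℝ^d` making an angle at most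
`α < π/2` (every unit vector of `U` is within distance `sin α` of `V`), then the orthogonal
projection onto `V`, restricted to `U`, is a bijection from `U` to `V`, and the image of
`U ∩ B(0,r)` contains `V ∩ B(0, r cos α)`. -/
theorem projection_between_close_subspaces
    (d k : ℕ) (U V : Submodule ℝ (EuclideanSpace ℝ (Fin d)))
    (hU : Module.finrank ℝ U = k) (hV : Module.finrank ℝ V = k)
    (α : ℝ) (hα0 : 0 ≤ α) (hα1 : α < Real.pi / 2)
    (hangle : ∀ u ∈ U, ‖u‖ = 1 →
      Metric.infDist u (V : Set (EuclideanSpace ℝ (Fin d))) ≤ Real.sin α) :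
    Function.Bijective
      (fun u : U => V.orthogonalProjection (u : EuclideanSpace ℝ (Fin d))) ∧
    ∀ r : ℝ, 0 < r →
      (V : Set (EuclideanSpace ℝ (Fin d))) ∩ Metric.closedBall 0 (r * Real.cos α) ⊆
        (fun u : EuclideanSpace ℝ (Fin d) =>
            (V.orthogonalProjection u : EuclideanSpace ℝ (Fin d))) ''
          ((U : Set (EuclideanSpace ℝ (Fin d))) ∩ Metric.closedBall 0 r) := by
  have hcos : 0 < Real.cos α := Real.cos_pos_of_mem_Ioo ⟨by linarith [Real.pi_pos], hα1⟩
  have hbound : ∀ u ∈ U, Real.cos α * ‖u‖ ≤ ‖V.starProjection u‖ := fun u hu =>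
    Submodule.cos_mul_norm_le_norm_starProjection
      (Submodule.norm_sub_starProjection_le_mul_norm hangle hu)
  have hbij := Submodule.bijective_orthogonalProjectionOnto_comp_subtype (hU.trans hV.symm)
    hcos hbound
  exact ⟨hbij, fun r _ =>
    Submodule.inter_closedBall_subset_image_starProjection hbij.2 hcos hbound r⟩
end

section
/- Let T be an m-dimensional linear subspace of ℝ^d with orthogonal complement T^⊥, let ĉ, c̃ ∈ ℝ^d with ‖c̃ − ĉ‖ ≤ μ, and let N be a (d − m)-dimensional affine flat passing through c̃ such that every unit vector u in the direction space of N satisfies dist(u, T^⊥) ≤ sin α, for some α ∈ [0, π/2). Then every point x in the intersection of N with the affine flat ĉ + T satisfies (1) ‖c̃ − x‖ ≤ μ/cos α and (2) ‖ĉ − x‖ ≤ (1 + 1/cos α)·μ. -/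
/-!
Write `v = c̃ - x`, a vector in the direction of `N`. The distance from a vector to `T^⊥`
dominates its `T`-component, so the angle condition bounds that component by `sin α ‖v‖`, while
its normal component equals that of `c̃ - ĉ` (because `x - ĉ ∈ T`), hence has norm at most `μ`.
Pythagoras then gives `cos α ‖v‖ ≤ μ`, and the second bound follows from the triangle
inequality through `c̃`.
-/

open Metric Real

namespace Submodule

variable {𝕜 E : Type*} [RCLike 𝕜] [NormedAddCommGroup E] [InnerProductSpace 𝕜 E]
  (K : Submodule 𝕜 E) [K.HasOrthogonalProjection]

theorem norm_starProjection_le_infDist_orthogonal (u : E) :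
    ‖K.starProjection u‖ ≤ infDist u (Kᗮ : Set E) := by
  refine (le_infDist ⟨0, Kᗮ.zero_mem⟩).2 fun y hy => ?_
  have hy0 : K.starProjection y = 0 := K.starProjection_apply_eq_zero_iff.2 hy
  calc ‖K.starProjection u‖ = ‖K.starProjection (u - y)‖ := by rw [map_sub, hy0, sub_zero]
    _ ≤ dist u y := by rw [dist_eq_norm]; exact K.norm_starProjection_apply_le _

theorem norm_starProjection_le_mul_norm_of_forall_norm_eq_one {V : Submodule 𝕜 E} {s : ℝ}
    (h : ∀ u ∈ V, ‖u‖ = 1 → ‖K.starProjection u‖ ≤ s) {v : E} (hv : v ∈ V) :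
    ‖K.starProjection v‖ ≤ s * ‖v‖ := by
  rcases eq_or_ne v 0 with rfl | hv0
  · simp
  have hpos : 0 < ‖v‖ := norm_pos_iff.2 hv0
  have hu := h ((‖v‖ : 𝕜)⁻¹ • v) (V.smul_mem _ hv) (norm_smul_inv_norm hv0)
  rw [map_smul, norm_smul, norm_inv, RCLike.norm_ofReal, abs_norm, inv_mul_le_iff₀ hpos] at hu
  linarith

theorem cos_mul_norm_le_of_norm_starProjection_le {α μ : ℝ} {v : E}
    (hK : ‖K.starProjection v‖ ≤ sin α * ‖v‖) (hKperp : ‖Kᗮ.starProjection v‖ ≤ μ) :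
    cos α * ‖v‖ ≤ μ := by
  have hpyth := norm_sq_eq_add_norm_sq_starProjection v K
  have hK0 := norm_nonneg (K.starProjection v)
  have hKperp0 := norm_nonneg (Kᗮ.starProjection v)
  refine (abs_le_of_sq_le_sq' ?_ (hKperp0.trans hKperp)).2
  nlinarith [sin_sq_add_cos_sq α, mul_self_nonneg (‖v‖ * cos α)]

end Submodule

theorem flat_meets_tangent_flat_nearby_general
    (d : ℕ)
    (T : Submodule ℝ (EuclideanSpace ℝ (Fin d)))
    (chat ctil : EuclideanSpace ℝ (Fin d)) (μ : ℝ) (hμ : ‖ctil - chat‖ ≤ μ)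
    (α : ℝ) (hα0 : 0 ≤ α) (hα1 : α < Real.pi / 2)
    (N : AffineSubspace ℝ (EuclideanSpace ℝ (Fin d))) (hctil : ctil ∈ N)
    (hangle : ∀ u ∈ N.direction, ‖u‖ = 1 →
      Metric.infDist u ((Tᗮ : Submodule ℝ (EuclideanSpace ℝ (Fin d))) :
        Set (EuclideanSpace ℝ (Fin d))) ≤ Real.sin α) :
    ∀ x ∈ N, x - chat ∈ T →
      ‖ctil - x‖ ≤ μ / Real.cos α ∧ ‖chat - x‖ ≤ (1 + 1 / Real.cos α) * μ := by
  intro x hx hxT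
  have hcos : 0 < Real.cos α := Real.cos_pos_of_mem_Ioo ⟨by linarith [Real.pi_pos], hα1⟩
  have htangent : ‖T.starProjection (ctil - x)‖ ≤ Real.sin α * ‖ctil - x‖ :=
    T.norm_starProjection_le_mul_norm_of_forall_norm_eq_one
      (fun u hu hu1 => (T.norm_starProjection_le_infDist_orthogonal u).trans (hangle u hu hu1))
      (AffineSubspace.vsub_mem_direction hctil hx)
  have hnormal : ‖Tᗮ.starProjection (ctil - x)‖ ≤ μ := by
    rw [← sub_sub_sub_cancel_right ctil x chat, map_sub,
      Submodule.starProjection_orthogonal_apply_eq_zero hxT, sub_zero]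
    exact (Tᗮ.norm_starProjection_apply_le _).trans hμ
  have hfar : ‖ctil - x‖ ≤ μ / Real.cos α := by
    rw [le_div_iff₀ hcos, mul_comm]
    exact T.cos_mul_norm_le_of_norm_starProjection_le htangent hnormal
  refine ⟨hfar, ?_⟩
  calc ‖chat - x‖ ≤ ‖chat - ctil‖ + ‖ctil - x‖ := norm_sub_le_norm_sub_add_norm_sub _ _ _
    _ ≤ μ + μ / Real.cos α := by rw [norm_sub_rev]; gcongr
    _ = (1 + 1 / Real.cos α) * μ := by ring

/-- If `N` is a `(d-m)`-flat through `c̃` making an angle at most `α < π/2` with the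
orthogonal complement `T^⊥` of an `m`-dimensional subspace `T`, and `‖c̃ - ĉ‖ ≤ μ`, then
every point `x` of `N ∩ (ĉ + T)` satisfies `‖c̃ - x‖ ≤ μ / cos α` and
`‖ĉ - x‖ ≤ (1 + 1/cos α) μ`. -/
theorem flat_meets_tangent_flat_nearby
    (d m : ℕ) (hm : m ≤ d)
    (T : Submodule ℝ (EuclideanSpace ℝ (Fin d)))
    (hT : Module.finrank ℝ T = m)
    (chat ctil : EuclideanSpace ℝ (Fin d)) (μ : ℝ) (hμ : ‖ctil - chat‖ ≤ μ)
    (α : ℝ) (hα0 : 0 ≤ α) (hα1 : α < Real.pi / 2)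
    (N : AffineSubspace ℝ (EuclideanSpace ℝ (Fin d))) (hctil : ctil ∈ N)
    (hNdim : Module.finrank ℝ N.direction = d - m)
    (hangle : ∀ u ∈ N.direction, ‖u‖ = 1 →
      Metric.infDist u ((Tᗮ : Submodule ℝ (EuclideanSpace ℝ (Fin d))) :
        Set (EuclideanSpace ℝ (Fin d))) ≤ Real.sin α) :
    ∀ x ∈ N, x - chat ∈ T →
      ‖ctil - x‖ ≤ μ / Real.cos α ∧ ‖chat - x‖ ≤ (1 + 1 / Real.cos α) * μ :=
  flat_meets_tangent_flat_nearby_general d T chat ctil μ hμ α hα0 hα1 N hctil hangle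
end

section
/- Let p₀, p₁, …, p_k be affinely independent points in ℝ^k, and let σ denote their convex hull (a full-dimensional k-simplex). Let M(σ) = (b_{ij})_{1 ≤ i,j ≤ k} be the k × k matrix with entries b_{ij} = (‖p_i − p₀‖² + ‖p_j − p₀‖² − ‖p_i − p_j‖²)/2 (so that b_{ij} = ⟨p_i − p₀, p_j − p₀⟩). Then the Lebesgue measure of σ equals (1/k!)·√(|det M(σ)|). In particular, the volume of a simplex is determined by the pairwise distances between its vertices. -/
/-!
Writing `vᵢ = pᵢ₊₁ - p₀`, the simplex is the image of the corner simplex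
`{x | 0 ≤ x, ∑ xᵢ ≤ 1}` under the affine map `x ↦ p₀ + ∑ xᵢ • vᵢ`, so its volume is `|det A| / k!`
where `A` is the matrix with columns `vᵢ`; the corner simplex has volume `1 / k!` by slicing along
the first coordinate. By polarization `M` is the Gram matrix `Aᵀ A` of the `vᵢ`, hence
`√|det M| = |det A|`.
-/

open MeasureTheory Set Matrix
open scoped Nat

def cornerSimplex (k : ℕ) (c : ℝ) : Set (Fin k → ℝ) := {x | (∀ i, 0 ≤ x i) ∧ ∑ i, x i ≤ c}

theorem cornerSimplex_succ (k : ℕ) (c : ℝ) :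
    cornerSimplex (k + 1) c = MeasurableEquiv.piFinSuccAbove (fun _ => ℝ) 0 ⁻¹'
      {q | q.1 ∈ Icc 0 c ∧ q.2 ∈ cornerSimplex k (c - q.1)} := by
  ext x
  simp only [cornerSimplex, MeasurableEquiv.piFinSuccAbove_apply, Fin.insertNthEquiv_symm_apply,
    mem_preimage, mem_ofPred_eq, Fin.forall_fin_succ, Fin.sum_univ_succ, mem_Icc,
    le_sub_iff_add_le']
  constructor
  · rintro ⟨⟨h0, hs⟩, hc⟩
    exact ⟨⟨h0, by linarith [Finset.sum_nonneg fun i (_ : i ∈ Finset.univ) => hs i]⟩, hs, hc⟩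
  · rintro ⟨⟨h0, -⟩, hs, hc⟩
    exact ⟨⟨h0, hs⟩, hc⟩

theorem integral_Icc_sub_pow_div_factorial (k : ℕ) {c : ℝ} (hc : 0 ≤ c) :
    ∫ a in Icc 0 c, (c - a) ^ k / k ! = c ^ (k + 1) / (k + 1)! := by
  rw [integral_Icc_eq_integral_Ioc, ← intervalIntegral.integral_of_le hc,
    intervalIntegral.integral_div, intervalIntegral.integral_comp_sub_left (fun x => x ^ k),
    integral_pow, Nat.factorial_succ]
  push_cast
  field_simp
  ring

theorem volume_cornerSimplex (k : ℕ) {c : ℝ} (hc : 0 ≤ c) :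
    volume (cornerSimplex k c) = ENNReal.ofReal (c ^ k / k !) := by
  induction k generalizing c with
  | zero =>
    have huniv : cornerSimplex 0 c = univ := by ext x; simp [cornerSimplex, hc]
    simp [huniv, volume_pi]
  | succ k ih =>
    set T := {q : ℝ × (Fin k → ℝ) | q.1 ∈ Icc 0 c ∧ q.2 ∈ cornerSimplex k (c - q.1)}
    have hT : MeasurableSet T := by simp only [T, cornerSimplex]; measurability
    have hslice : ∀ a, volume (Prod.mk a ⁻¹' T) =
        (Icc 0 c).indicator (fun a => ENNReal.ofReal ((c - a) ^ k / k !)) a := by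
      intro a
      by_cases ha : a ∈ Icc 0 c
      · simp only [T, preimage_ofPred_eq, ha, true_and, ofPred_mem_eq, indicator_of_mem,
          ih (sub_nonneg.2 ha.2)]
      · simp only [T, preimage_ofPred_eq, ha, false_and, ofPred_false, measure_empty,
          indicator_of_notMem, not_false_eq_true]
    rw [cornerSimplex_succ,
      (volume_preserving_piFinSuccAbove _ 0).measure_preimage hT.nullMeasurableSet,
      Measure.volume_eq_prod, Measure.prod_apply hT, lintegral_congr hslice,
      lintegral_indicator measurableSet_Icc, ← ofReal_integral_eq_lintegral_ofReal,
      integral_Icc_sub_pow_div_factorial k hc]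
    · exact Continuous.integrableOn_Icc (by fun_prop)
    · filter_upwards [ae_restrict_mem measurableSet_Icc] with a ha
      exact div_nonneg (pow_nonneg (by linarith [ha.2]) k) (by positivity)

theorem convexHull_range_eq_image_stdSimplex {R ι E : Type*} [Field R] [LinearOrder R]
    [IsStrictOrderedRing R] [Fintype ι] [AddCommGroup E] [Module R E] (p : ι → E) :
    convexHull R (range p) = (fun w => ∑ i, w i • p i) '' stdSimplex R ι := by
  classical
  rw [← convexHull_rangle_single_eq_stdSimplex]
  change _ = Fintype.linearCombination R p '' _
  rw [LinearMap.image_convexHull, ← range_comp]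
  congr 2
  funext i
  simp

theorem stdSimplex_fin_succ_eq_image (k : ℕ) :
    stdSimplex ℝ (Fin (k + 1)) = (fun x => Fin.cons (1 - ∑ i, x i) x) '' cornerSimplex k 1 := by
  ext w
  simp only [stdSimplex, cornerSimplex, mem_image, mem_ofPred_eq]
  constructor
  · rintro ⟨hw, hsum⟩
    rw [Fin.sum_univ_succ] at hsum
    refine ⟨Fin.tail w, ⟨fun i => hw i.succ, by simp only [Fin.tail]; linarith [hw 0]⟩, ?_⟩
    conv_rhs => rw [← Fin.cons_self_tail w]
    congr
    simp only [Fin.tail]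
    linarith
  · rintro ⟨x, ⟨hx, hsum⟩, rfl⟩
    refine ⟨Fin.cases (sub_nonneg.2 hsum) hx, ?_⟩
    simp [Fin.sum_univ_succ]

theorem convexHull_range_fin_succ_eq_image {k : ℕ} {E : Type*} [AddCommGroup E] [Module ℝ E]
    (p : Fin (k + 1) → E) :
    convexHull ℝ (range p) =
      (fun x => p 0 + ∑ i, x i • (p i.succ - p 0)) '' cornerSimplex k 1 := by
  rw [convexHull_range_eq_image_stdSimplex, stdSimplex_fin_succ_eq_image, image_image]
  refine image_congr fun x _ => ?_
  simp only [Fin.sum_univ_succ, Fin.cons_zero, Fin.cons_succ, smul_sub, Finset.sum_sub_distrib,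
    sub_smul, one_smul, ← Finset.sum_smul]
  abel

theorem volume_image_add_linearCombination {ι : Type*} [Fintype ι] [DecidableEq ι]
    (v : ι → ι → ℝ) (b : ι → ℝ) (s : Set (ι → ℝ)) :
    volume ((fun x => b + ∑ i, x i • v i) '' s) =
      ENNReal.ofReal |(of fun i j => v j i).det| * volume s := by
  have hmap : (fun x => b + ∑ i, x i • v i) = (b +ᵥ ·) ∘ Fintype.linearCombination ℝ v := by
    funext x
    simp [Fintype.linearCombination_apply]
  rw [hmap, image_comp, image_vadd, measure_vadd, Measure.addHaar_image_linearMap,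
    ← LinearMap.det_toMatrix']
  congr 4
  ext i j
  simp [LinearMap.toMatrix'_apply]

theorem volume_convexHull_range_fin_succ {k : ℕ} (q : Fin (k + 1) → Fin k → ℝ) :
    volume (convexHull ℝ (range q)) =
      ENNReal.ofReal (|(of fun i j => (q j.succ - q 0) i).det| / k !) := by
  rw [convexHull_range_fin_succ_eq_image, volume_image_add_linearCombination,
    volume_cornerSimplex k zero_le_one, ← ENNReal.ofReal_mul (abs_nonneg _), one_pow, mul_one_div]

theorem EuclideanSpace.volume_convexHull_range {ι κ : Type*} [Fintype ι]
    (p : κ → EuclideanSpace ℝ ι) :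
    volume (convexHull ℝ (range p)) = volume (convexHull ℝ (range fun j => (p j).ofLp)) := by
  rw [← (EuclideanSpace.volume_preserving_symm_measurableEquiv_toLp ι).measure_preimage_equiv,
    ← MeasurableEquiv.image_eq_preimage_symm]
  change _ = volume ((WithLp.linearEquiv 2 ℝ (ι → ℝ)).symm.toLinearMap '' _)
  rw [LinearMap.image_convexHull, ← range_comp]
  rfl

theorem OrthonormalBasis.det_gram_eq_sq_det {ι E : Type*} [Fintype ι] [DecidableEq ι]
    [NormedAddCommGroup E] [InnerProductSpace ℝ E] (b : OrthonormalBasis ι ℝ E) (v : ι → E) :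
    (gram ℝ v).det = b.toBasis.det v ^ 2 := by
  rw [gram_eq_conjTranspose_mul b, det_mul, det_conjTranspose, Module.Basis.det_apply, sq]
  rfl

theorem volume_simplex_from_distances_general
    (k : ℕ) (p : Fin (k + 1) → EuclideanSpace ℝ (Fin k))
    (M : Matrix (Fin k) (Fin k) ℝ)
    (hM : ∀ i j : Fin k, M i j =
      (‖p i.succ - p 0‖ ^ 2 + ‖p j.succ - p 0‖ ^ 2 - ‖p i.succ - p j.succ‖ ^ 2) / 2) :
    MeasureTheory.volume (convexHull ℝ (Set.range p)) =
      ENNReal.ofReal ((1 / (Nat.factorial k : ℝ)) * Real.sqrt |M.det|) := by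
  set v : Fin k → EuclideanSpace ℝ (Fin k) := fun i => p i.succ - p 0
  have hM_gram : M = gram ℝ v := by
    ext i j
    rw [hM, gram_apply, real_inner_eq_norm_mul_self_add_norm_mul_self_sub_norm_sub_mul_self_div_two,
      ← sub_sub_sub_cancel_right (p i.succ) (p j.succ) (p 0)]
    ring
  have hdet : √|M.det| = |(of fun i j => v j i).det| := by
    rw [hM_gram, (EuclideanSpace.basisFun (Fin k) ℝ).det_gram_eq_sq_det, abs_sq,
      Real.sqrt_sq_eq_abs, Module.Basis.det_apply]
    rfl
  rw [EuclideanSpace.volume_convexHull_range, volume_convexHull_range_fin_succ, hdet,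
    one_div_mul_eq_div]
  rfl

/-- The volume of a full-dimensional simplex in `ℝ^k` equals `(1/k!)·√|det M(σ)|`,
where `M(σ)` is the Gram matrix of edge vectors, whose entries are determined by the
pairwise distances between the vertices. -/
theorem volume_simplex_from_distances
    (k : ℕ) (p : Fin (k + 1) → EuclideanSpace ℝ (Fin k))
    (hind : AffineIndependent ℝ p)
    (M : Matrix (Fin k) (Fin k) ℝ)
    (hM : ∀ i j : Fin k, M i j =
      (‖p i.succ - p 0‖ ^ 2 + ‖p j.succ - p 0‖ ^ 2 - ‖p i.succ - p j.succ‖ ^ 2) / 2) :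
    MeasureTheory.volume (convexHull ℝ (Set.range p)) =
      ENNReal.ofReal ((1 / (Nat.factorial k : ℝ)) * Real.sqrt |M.det|) :=
  volume_simplex_from_distances_general k p M hM
end
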